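/- arXiv:1312.6677 — 10 statements merged into one kernel-verified Lean document; each statement's English description precedes it below -/
import Mathlib

section
/- Let P be an n×n real symmetric projection matrix, Σ = Diag(P), and P^(2) the entrywise (Schur) square of P, i.e. (P^(2))_{ij} = P_{ij}². Then 0 ⪯ P^(2) ⪯ Σ ⪯ I in the Loewner order. -/
open Matrix

private lemma schur_aux {n : ℕ} (P Q : Matrix (Fin n) (Fin n) ℝ)
    (hP : P.IsSymm) (hQs : Q.IsSymm)
    (hPfac : ∀ i j, P i j = ∑ k, P k i * P k j)
    (hQ : ∀ x : Fin n → ℝ, 0 ≤ dotProduct x (Q *ᵥ x)) :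
    (Matrix.of fun i j => P i j * Q i j).PosSemidef := by
  rw [posSemidef_iff_dotProduct_mulVec]
  constructor
  · ext i j
    simp only [conjTranspose_apply, of_apply, star_trivial]
    rw [← hP.apply i j, ← hQs.apply i j]
  · intro x
    have key : dotProduct (star x) ((Matrix.of fun i j => P i j * Q i j) *ᵥ x)
        = ∑ k, dotProduct (fun i => P k i * x i) (Q *ᵥ (fun i => P k i * x i)) := by
      simp only [dotProduct, mulVec, star_trivial, of_apply]
      calc ∑ i, x i * ∑ j, P i j * Q i j * x j
          = ∑ i, ∑ j, ∑ k, (P k i * x i) * (Q i j * (P k j * x j)) := by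
            refine Finset.sum_congr rfl fun i _ => ?_
            rw [Finset.mul_sum]
            refine Finset.sum_congr rfl fun j _ => ?_
            rw [hPfac i j, Finset.sum_mul, Finset.sum_mul, Finset.mul_sum]
            exact Finset.sum_congr rfl fun k _ => by ring
        _ = ∑ k, ∑ i, P k i * x i * ∑ j, Q i j * (P k j * x j) := by
            simp only [Finset.mul_sum]
            conv_lhs => rw [show (∑ i, ∑ j, ∑ k, (P k i * x i) * (Q i j * (P k j * x j))) = ∑ i, ∑ k, ∑ j, (P k i * x i) * (Q i j * (P k j * x j)) from Finset.sum_congr rfl fun i _ => Finset.sum_comm]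
            rw [Finset.sum_comm]
    rw [key]
    exact Finset.sum_nonneg fun k _ => hQ _

theorem projection_schur_square_loewner {n : ℕ} (P : Matrix (Fin n) (Fin n) ℝ)
    (hsymm : P.IsSymm) (hproj : P * P = P) :
    (P.map (fun x => x ^ 2)).PosSemidef ∧
    (Matrix.diagonal (fun i => P i i) - P.map (fun x => x ^ 2)).PosSemidef ∧
    ((1 : Matrix (Fin n) (Fin n) ℝ) - Matrix.diagonal (fun i => P i i)).PosSemidef := by
  have hconj : Pᴴ = P := by
    ext i j; simpa using (hsymm.apply j i).symm
  have hPpsd : P.PosSemidef := by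
    have := posSemidef_conjTranspose_mul_self P
    rwa [hconj, hproj] at this
  have hQsymm : ((1 : Matrix (Fin n) (Fin n) ℝ) - P).IsSymm := by
    unfold Matrix.IsSymm
    rw [transpose_sub, transpose_one, hsymm]
  have hQconj : ((1 : Matrix (Fin n) (Fin n) ℝ) - P)ᴴ = 1 - P := by
    ext i j; simpa using (hQsymm.apply j i).symm
  have hQproj : ((1 : Matrix (Fin n) (Fin n) ℝ) - P) * (1 - P) = 1 - P := by
    rw [sub_mul, one_mul, mul_sub, mul_one, hproj]
    abel
  have hQpsd : ((1 : Matrix (Fin n) (Fin n) ℝ) - P).PosSemidef := by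
    have := posSemidef_conjTranspose_mul_self ((1 : Matrix (Fin n) (Fin n) ℝ) - P)
    rwa [hQconj, hQproj] at this
  have hPfac : ∀ i j, P i j = ∑ k, P k i * P k j := by
    intro i j
    conv_lhs => rw [← hproj]
    simp only [Matrix.mul_apply]
    exact Finset.sum_congr rfl fun k _ => by rw [hsymm.apply k i]
  refine ⟨?_, ?_, ?_⟩
  · have : P.map (fun x => x ^ 2) = Matrix.of fun i j => P i j * P i j := by
      ext i j; simp [sq]
    rw [this]
    exact schur_aux P P hsymm hsymm hPfac fun x => by simpa using hPpsd.dotProduct_mulVec_nonneg x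
  · have : Matrix.diagonal (fun i => P i i) - P.map (fun x => x ^ 2)
        = Matrix.of fun i j => P i j * ((1 - P) i j) := by
      ext i j
      by_cases h : i = j
      · subst h; simp [Matrix.diagonal_apply, Matrix.one_apply, sq]; ring
      · simp [Matrix.diagonal_apply, Matrix.one_apply, h, sq]
    rw [this]
    exact schur_aux P (1 - P) hsymm hQsymm hPfac fun x => by simpa using hQpsd.dotProduct_mulVec_nonneg x
  · have : (1 : Matrix (Fin n) (Fin n) ℝ) - Matrix.diagonal (fun i => P i i)
        = Matrix.diagonal (fun i => 1 - P i i) := by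
      rw [← Matrix.diagonal_one, Matrix.diagonal_sub]
    rw [this]
    refine Matrix.PosSemidef.diagonal fun i => ?_
    have h := hQpsd.dotProduct_mulVec_nonneg (Pi.single i 1)
    simp [Matrix.mulVec, dotProduct, Pi.single_apply, Matrix.sub_apply, Matrix.one_apply] at h
    simpa using h
end

section
/- Let P be an n×n real symmetric projection matrix with diagonal σ_i = P_{ii}, and let x ∈ ℝⁿ. Then for each index i, |Σ_j P_{ij}² x_j| ≤ σ_i · sqrt(Σ_j σ_j x_j²). -/
open Matrix

theorem projection_schur_square_row_bound {n : ℕ} (P : Matrix (Fin n) (Fin n) ℝ)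
    (hsymm : P.IsSymm) (hproj : P * P = P) (x : Fin n → ℝ) (i : Fin n) :
    |∑ j, (P i j) ^ 2 * x j| ≤ P i i * Real.sqrt (∑ j, P j j * (x j) ^ 2) := by
  have hsym : ∀ a b, P a b = P b a := fun a b => (Matrix.IsSymm.apply hsymm b a)
  have hdiag : ∀ j, ∑ k, P j k ^ 2 = P j j := by
    intro j
    have := congrFun (congrFun hproj j) j
    rw [Matrix.mul_apply] at this
    rw [← this]
    exact Finset.sum_congr rfl fun k _ => by rw [hsym k j]; ring
  have hdiag_nonneg : ∀ j, 0 ≤ P j j := by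
    intro j; rw [← hdiag j]; positivity
  have hschur : ∀ j, P i j ^ 2 ≤ P i i * P j j := by
    intro j
    have hij : ∑ k, P i k * P j k = P i j := by
      have := congrFun (congrFun hproj i) j
      rw [Matrix.mul_apply] at this
      rw [← this]
      exact Finset.sum_congr rfl fun k _ => by rw [hsym k j]
    calc P i j ^ 2 = (∑ k, P i k * P j k) ^ 2 := by rw [hij]
      _ ≤ (∑ k, P i k ^ 2) * ∑ k, P j k ^ 2 :=
          Finset.sum_mul_sq_le_sq_mul_sq Finset.univ _ _
      _ = P i i * P j j := by rw [hdiag i, hdiag j]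
  set S := ∑ j, P j j * (x j) ^ 2 with hS
  have hSnn : 0 ≤ S := Finset.sum_nonneg fun j _ => by
    have := hdiag_nonneg j; positivity
  have key : (∑ j, (P i j) ^ 2 * x j) ^ 2 ≤ P i i ^ 2 * S := by
    have h1 : (∑ j, (P i j) ^ 2 * x j) = ∑ j, P i j * (P i j * x j) :=
      Finset.sum_congr rfl fun j _ => by ring
    have h2 : (∑ j, P i j * (P i j * x j)) ^ 2
        ≤ (∑ j, P i j ^ 2) * ∑ j, (P i j * x j) ^ 2 :=
      Finset.sum_mul_sq_le_sq_mul_sq Finset.univ _ _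
    have h3 : ∑ j, (P i j * x j) ^ 2 ≤ P i i * S := by
      rw [hS, Finset.mul_sum]
      apply Finset.sum_le_sum
      intro j _
      have := hschur j
      have hx : 0 ≤ x j ^ 2 := sq_nonneg _
      calc (P i j * x j) ^ 2 = P i j ^ 2 * x j ^ 2 := by ring
        _ ≤ (P i i * P j j) * x j ^ 2 := by nlinarith
        _ = P i i * (P j j * x j ^ 2) := by ring
    calc (∑ j, (P i j) ^ 2 * x j) ^ 2
        = (∑ j, P i j * (P i j * x j)) ^ 2 := by rw [h1]
      _ ≤ (∑ j, P i j ^ 2) * ∑ j, (P i j * x j) ^ 2 := h2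
      _ ≤ P i i * (P i i * S) := by
          rw [hdiag i]
          exact mul_le_mul_of_nonneg_left h3 (hdiag_nonneg i)
      _ = P i i ^ 2 * S := by ring
  have : |∑ j, (P i j) ^ 2 * x j| = Real.sqrt ((∑ j, (P i j) ^ 2 * x j) ^ 2) :=
    (Real.sqrt_sq_eq_abs _).symm
  rw [this]
  calc Real.sqrt ((∑ j, (P i j) ^ 2 * x j) ^ 2)
      ≤ Real.sqrt (P i i ^ 2 * S) := Real.sqrt_le_sqrt key
    _ = P i i * Real.sqrt S := by
        rw [Real.sqrt_mul (sq_nonneg _), Real.sqrt_sq (hdiag_nonneg i)]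
end

section
/- Let A ∈ ℝ^{m×n} have full column rank, S ∈ ℝ^{m×m} and W ∈ ℝ^{m×m} positive diagonal matrices, and let P = W^{1/2} S^{-1} A (Aᵀ S^{-1} W S^{-1} A)^{-1} Aᵀ S^{-1} W^{1/2}. Then ‖Aᵀ S^{-1} w‖_{(Aᵀ S^{-1} W S^{-1} A)^{-1}} ≤ sqrt(Σ_i w_i), where w is the diagonal vector of W. -/
open Matrix

private lemma dot_nonneg {k : ℕ} (y : Fin k → ℝ) : 0 ≤ y ⬝ᵥ y :=
  Finset.sum_nonneg fun i _ => mul_self_nonneg _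

private lemma dot_transpose {m n : ℕ} (B : Matrix (Fin m) (Fin n) ℝ) (x : Fin n → ℝ)
    (y : Fin m → ℝ) : x ⬝ᵥ (Bᵀ *ᵥ y) = (B *ᵥ x) ⬝ᵥ y := by
  rw [Matrix.dotProduct_mulVec, Matrix.vecMul_transpose]

theorem weighted_projection_norm_bound {m n : ℕ} (A : Matrix (Fin m) (Fin n) ℝ)
    (hrank : A.rank = n) (s w : Fin m → ℝ) (hs : ∀ i, 0 < s i) (hw : ∀ i, 0 < w i) :
    Real.sqrt
        ((Aᵀ *ᵥ fun i => w i / s i) ⬝ᵥ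
          ((Aᵀ * (Matrix.diagonal s)⁻¹ * Matrix.diagonal w * (Matrix.diagonal s)⁻¹ * A)⁻¹ *ᵥ
            (Aᵀ *ᵥ fun i => w i / s i))) ≤
      Real.sqrt (∑ i, w i) := by
  classical
  apply Real.sqrt_le_sqrt
  set B : Matrix (Fin m) (Fin n) ℝ := Matrix.of (fun i j => Real.sqrt (w i) / s i * A i j)
    with hBdef
  set u : Fin m → ℝ := fun i => Real.sqrt (w i) with hudef
  set M : Matrix (Fin n) (Fin n) ℝ :=
    Aᵀ * (Matrix.diagonal s)⁻¹ * Matrix.diagonal w * (Matrix.diagonal s)⁻¹ * A with hMdef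
  set v : Fin n → ℝ := Aᵀ *ᵥ fun i => w i / s i with hvdef
  have hsinv : (Matrix.diagonal s)⁻¹ = Matrix.diagonal (fun i => (s i)⁻¹) := by
    apply Matrix.inv_eq_left_inv
    rw [Matrix.diagonal_mul_diagonal]
    have hfun : (fun i => (s i)⁻¹ * s i) = fun _ => (1:ℝ) :=
      funext fun i => inv_mul_cancel₀ (hs i).ne'
    rw [hfun, Matrix.diagonal_one]
  -- M = Bᵀ B
  have hM2 : M = Aᵀ * (Matrix.diagonal (fun i => (s i)⁻¹ * w i * (s i)⁻¹) * A) := by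
    rw [hMdef, hsinv, Matrix.mul_assoc Aᵀ, Matrix.mul_assoc Aᵀ, Matrix.mul_assoc Aᵀ,
      Matrix.diagonal_mul_diagonal, Matrix.diagonal_mul_diagonal]
  have hMeq : M = Bᵀ * B := by
    rw [hM2]
    ext j k
    rw [Matrix.mul_apply, Matrix.mul_apply]
    apply Finset.sum_congr rfl
    intro i _
    rw [Matrix.diagonal_mul]
    simp only [Matrix.transpose_apply, hBdef, Matrix.of_apply]
    have hwi : Real.sqrt (w i) * Real.sqrt (w i) = w i := Real.mul_self_sqrt (hw i).le
    have hsi : s i ≠ 0 := (hs i).ne'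
    field_simp
    linear_combination (A i j * A i k) * hwi.symm
  -- v = Bᵀ u
  have hveq : v = Bᵀ *ᵥ u := by
    rw [hvdef]
    ext j
    simp only [Matrix.mulVec, dotProduct, Matrix.transpose_apply, hBdef, Matrix.of_apply,
      hudef]
    apply Finset.sum_congr rfl
    intro i _
    have hwi : Real.sqrt (w i) * Real.sqrt (w i) = w i := Real.mul_self_sqrt (hw i).le
    have hsi : s i ≠ 0 := (hs i).ne'
    field_simp
    linear_combination (A i j) * hwi.symm
  -- A mulVec injective
  have hAinj : ∀ x : Fin n → ℝ, A *ᵥ x = 0 → x = 0 := by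
    intro x hx
    have hker : LinearMap.ker A.mulVecLin = ⊥ := by
      have h1 := A.mulVecLin.finrank_range_add_finrank_ker
      rw [show Module.finrank ℝ (LinearMap.range A.mulVecLin) = A.rank from rfl, hrank] at h1
      have h2 : Module.finrank ℝ (Fin n → ℝ) = n := by
        simp [Module.finrank_pi]
      rw [h2] at h1
      have h3 : Module.finrank ℝ (LinearMap.ker A.mulVecLin) = 0 := by omega
      exact Submodule.finrank_eq_zero.mp h3
    have hinj := LinearMap.ker_eq_bot.mp hker
    have hx0 : A.mulVecLin x = A.mulVecLin 0 := by
      simpa [Matrix.mulVecLin_apply] using hx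
    exact hinj hx0
  -- B mulVec injective
  have hBinj : ∀ x : Fin n → ℝ, B *ᵥ x = 0 → x = 0 := by
    intro x hx
    apply hAinj
    ext i
    have hxi : (B *ᵥ x) i = 0 := by rw [hx]; rfl
    have hc : Real.sqrt (w i) / s i ≠ 0 :=
      div_ne_zero (Real.sqrt_pos.mpr (hw i)).ne' (hs i).ne'
    have hmul : Real.sqrt (w i) / s i * (A *ᵥ x) i = 0 := by
      rw [← hxi]
      simp only [Matrix.mulVec, dotProduct, hBdef, Matrix.of_apply, Finset.mul_sum]
      apply Finset.sum_congr rfl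
      intro j _
      ring
    rcases mul_eq_zero.mp hmul with h | h
    · exact absurd h hc
    · simpa using h
  -- M pos def
  have hMpd : M.PosDef := by
    rw [hMeq]
    refine Matrix.PosDef.of_dotProduct_mulVec_pos (Matrix.isHermitian_conjTranspose_mul_self B) fun x hx => ?_
    have hBx : B *ᵥ x ≠ 0 := fun h => hx (hBinj x h)
    have key : star x ⬝ᵥ ((Bᵀ * B) *ᵥ x) = (B *ᵥ x) ⬝ᵥ (B *ᵥ x) := by
      rw [star_trivial, ← Matrix.mulVec_mulVec, dot_transpose]
    rw [key]
    rcases (dot_nonneg (B *ᵥ x)).lt_or_eq with h | h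
    · exact h
    · exact absurd (dotProduct_self_eq_zero.mp h.symm) hBx
  have hMunit : IsUnit M := hMpd.isUnit
  set x : Fin n → ℝ := M⁻¹ *ᵥ v with hxdef
  have hMx : M *ᵥ x = v := by
    rw [hxdef, Matrix.mulVec_mulVec, Matrix.mul_nonsing_inv M
      ((Matrix.isUnit_iff_isUnit_det M).mp hMunit), Matrix.one_mulVec]
  have h1 : v ⬝ᵥ x = (B *ᵥ x) ⬝ᵥ (B *ᵥ x) :=
    calc v ⬝ᵥ x = x ⬝ᵥ v := dotProduct_comm _ _
      _ = x ⬝ᵥ (M *ᵥ x) := by rw [hMx]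
      _ = x ⬝ᵥ (Bᵀ *ᵥ (B *ᵥ x)) := by rw [hMeq, ← Matrix.mulVec_mulVec]
      _ = (B *ᵥ x) ⬝ᵥ (B *ᵥ x) := dot_transpose _ _ _
  have h2 : v ⬝ᵥ x = u ⬝ᵥ (B *ᵥ x) :=
    calc v ⬝ᵥ x = x ⬝ᵥ v := dotProduct_comm _ _
      _ = x ⬝ᵥ (Bᵀ *ᵥ u) := by rw [hveq]
      _ = (B *ᵥ x) ⬝ᵥ u := dot_transpose _ _ _
      _ = u ⬝ᵥ (B *ᵥ x) := dotProduct_comm _ _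
  have hcs := Finset.sum_mul_sq_le_sq_mul_sq Finset.univ u (B *ᵥ x)
  have hu2 : ∑ i, u i ^ 2 = ∑ i, w i :=
    Finset.sum_congr rfl fun i _ => by simp [hudef, Real.sq_sqrt (hw i).le]
  have hb2 : ∑ i, (B *ᵥ x) i ^ 2 = (B *ᵥ x) ⬝ᵥ (B *ᵥ x) := by
    simp [dotProduct, sq]
  have hub : ∑ i, u i * (B *ᵥ x) i = u ⬝ᵥ (B *ᵥ x) := rfl
  rw [hu2, hb2, hub] at hcs
  have ht0 : 0 ≤ v ⬝ᵥ x := h1 ▸ dot_nonneg _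
  have hW0 : 0 ≤ ∑ i, w i := Finset.sum_nonneg fun i _ => (hw i).le
  rcases ht0.lt_or_eq with h | h
  · nlinarith [hcs, h1, h2]
  · rw [← h]; exact hW0
end

section
/- Let A ∈ ℝ^{m×n} have full column rank, x with s := Ax − b > 0 entrywise, W = Diag(w) with w > 0, and Δ ∈ ℝⁿ. Then ‖S^{-1} A Δ‖_∞ ≤ ‖Δ‖_{Aᵀ S^{-1} W S^{-1} A} · max_i ‖W^{-1/2} e_i‖_{P}, where P = W^{1/2} S^{-1} A (Aᵀ S^{-1} W S^{-1} A)^{-1} Aᵀ S^{-1} W^{1/2}. Moreover, if ‖S^{-1} A Δ‖_∞ < 1 then x + Δ is strictly feasible (A(x+Δ) > b entrywise). -/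
open Matrix Finset

lemma aux_mulVec_inj {m n : ℕ} (A : Matrix (Fin m) (Fin n) ℝ) (hrank : A.rank = n) :
    ∀ v : Fin n → ℝ, A *ᵥ v = 0 → v = 0 := by
  have h := LinearMap.finrank_range_add_finrank_ker A.mulVecLin
  rw [show Module.finrank ℝ (LinearMap.range A.mulVecLin) = A.rank from rfl] at h
  rw [hrank, Module.finrank_pi, Fintype.card_fin] at h
  have hker : LinearMap.ker A.mulVecLin = ⊥ := Submodule.finrank_eq_zero.mp (by omega)
  intro v hv
  have : v ∈ LinearMap.ker A.mulVecLin := by simpa [Matrix.mulVecLin_apply] using hv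
  simpa [hker] using this

lemma aux_cs {m : ℕ} (f g : Fin m → ℝ) :
    |f ⬝ᵥ g| ≤ Real.sqrt (f ⬝ᵥ f) * Real.sqrt (g ⬝ᵥ g) := by
  have h := Finset.sum_mul_sq_le_sq_mul_sq univ f g
  have hf : f ⬝ᵥ f = ∑ i, f i ^ 2 := by simp [dotProduct, sq]
  have hg : g ⬝ᵥ g = ∑ i, g i ^ 2 := by simp [dotProduct, sq]
  have hnn : (0:ℝ) ≤ ∑ i, f i ^ 2 := by positivity
  rw [show |f ⬝ᵥ g| = Real.sqrt ((f ⬝ᵥ g) ^ 2) from (Real.sqrt_sq_eq_abs _).symm,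
    hf, hg, ← Real.sqrt_mul hnn]
  exact Real.sqrt_le_sqrt (by simpa [dotProduct] using h)

lemma aux_dp_pos {m : ℕ} {f : Fin m → ℝ} (hf : f ≠ 0) : 0 < f ⬝ᵥ f := by
  have h0 : 0 ≤ f ⬝ᵥ f := Finset.sum_nonneg fun i _ => mul_self_nonneg _
  rcases h0.lt_or_eq with h | h
  · exact h
  · exact absurd (dotProduct_self_eq_zero.mp h.symm) hf

theorem slack_relative_change_bound {m n : ℕ} (hm : 0 < m)
    (A : Matrix (Fin m) (Fin n) ℝ) (hrank : A.rank = n)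
    (b : Fin m → ℝ) (x : Fin n → ℝ) (w : Fin m → ℝ)
    (s : Fin m → ℝ) (hsdef : s = A *ᵥ x - b)
    (hs : ∀ i, 0 < s i) (hw : ∀ i, 0 < w i) (Δ : Fin n → ℝ)
    (H : Matrix (Fin n) (Fin n) ℝ)
    (hH : H = Aᵀ * (Matrix.diagonal s)⁻¹ * Matrix.diagonal w * (Matrix.diagonal s)⁻¹ * A)
    (P : Matrix (Fin m) (Fin m) ℝ)
    (hP : P = Matrix.diagonal (fun i => Real.sqrt (w i)) * (Matrix.diagonal s)⁻¹ * A *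
        H⁻¹ * Aᵀ * (Matrix.diagonal s)⁻¹ * Matrix.diagonal (fun i => Real.sqrt (w i))) :
    (∀ i, |(A *ᵥ Δ) i / s i| ≤
        Real.sqrt (Δ ⬝ᵥ (H *ᵥ Δ)) *
          (univ.sup' (univ_nonempty_iff.2 ⟨⟨0, hm⟩⟩) fun i =>
            Real.sqrt ((Pi.single i (Real.sqrt (w i))⁻¹ : Fin m → ℝ) ⬝ᵥ
              (P *ᵥ Pi.single i (Real.sqrt (w i))⁻¹)))) ∧
    ((∀ i, |(A *ᵥ Δ) i / s i| < 1) → ∀ i, b i < (A *ᵥ (x + Δ)) i) := by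
  have hsne : ∀ i, s i ≠ 0 := fun i => (hs i).ne'
  have hsqw : ∀ i, Real.sqrt (w i) ≠ 0 := fun i => (Real.sqrt_pos.2 (hw i)).ne'
  set R : Matrix (Fin m) (Fin m) ℝ := Matrix.diagonal (fun i => Real.sqrt (w i)) with hR
  have hD : (Matrix.diagonal s)⁻¹ = Matrix.diagonal (fun i => (s i)⁻¹) := by
    apply Matrix.inv_eq_right_inv
    rw [Matrix.diagonal_mul_diagonal]
    convert Matrix.diagonal_one using 2
    exact funext fun i => mul_inv_cancel₀ (hsne i)
  set D : Matrix (Fin m) (Fin m) ℝ := Matrix.diagonal (fun i => (s i)⁻¹) with hDdef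
  set M : Matrix (Fin m) (Fin n) ℝ := R * D * A with hM
  have hMT : Mᵀ = Aᵀ * D * R := by
    rw [hM, Matrix.transpose_mul, Matrix.transpose_mul, hDdef, hR,
      Matrix.diagonal_transpose, Matrix.diagonal_transpose, ← Matrix.mul_assoc]
  have hRR : R * R = Matrix.diagonal w := by
    have hww : (fun i => Real.sqrt (w i) * Real.sqrt (w i)) = w :=
      funext fun i => Real.mul_self_sqrt (hw i).le
    rw [hR, Matrix.diagonal_mul_diagonal, hww]
  have hHM : H = Mᵀ * M := by
    rw [hH, hD, hMT, hM]
    simp only [Matrix.mul_assoc]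
    rw [← Matrix.mul_assoc R R, hRR]
  have hMv : ∀ v : Fin n → ℝ, M *ᵥ v = fun i => Real.sqrt (w i) * ((s i)⁻¹ * (A *ᵥ v) i) := by
    intro v
    funext i
    rw [hM, Matrix.mul_assoc, ← Matrix.mulVec_mulVec, hR, Matrix.mulVec_diagonal,
      ← Matrix.mulVec_mulVec, hDdef, Matrix.mulVec_diagonal]
  have hAinj := aux_mulVec_inj A hrank
  have hMinj : ∀ v : Fin n → ℝ, M *ᵥ v = 0 → v = 0 := by
    intro v hv
    apply hAinj
    funext i
    have hvi := congrFun hv i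
    rw [hMv] at hvi
    simp only [Pi.zero_apply] at hvi ⊢
    have h1 := (mul_eq_zero.mp hvi).resolve_left (hsqw i)
    exact (mul_eq_zero.mp h1).resolve_left (inv_ne_zero (hsne i))
  have hquad : ∀ v : Fin n → ℝ, v ⬝ᵥ (H *ᵥ v) = (M *ᵥ v) ⬝ᵥ (M *ᵥ v) := by
    intro v
    rw [hHM, ← Matrix.mulVec_mulVec, Matrix.dotProduct_mulVec, Matrix.vecMul_transpose]
  have hHpd : H.PosDef := by
    rw [Matrix.posDef_iff_dotProduct_mulVec]
    constructor
    · rw [hHM, ← Matrix.conjTranspose_eq_transpose_of_trivial]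
      exact Matrix.isHermitian_conjTranspose_mul_self M
    · intro v hv
      have h1 : star v ⬝ᵥ (H *ᵥ v) = (M *ᵥ v) ⬝ᵥ (M *ᵥ v) := by
        rw [show star v = v from rfl, hquad]
      rw [h1]
      exact aux_dp_pos (fun h => hv (hMinj v h))
  have hHsym : Hᵀ = H := by
    rw [hHM]; simp [Matrix.transpose_mul, Matrix.mul_assoc]
  haveI := hHpd.isUnit.invertible
  have hHinv : H * H⁻¹ = 1 := Matrix.mul_inv_of_invertible H
  have hPM : P = M * H⁻¹ * Mᵀ := by
    rw [hP, hD, hMT, hM]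
    simp only [Matrix.mul_assoc]
  constructor
  · intro i
    set u : Fin m → ℝ := Pi.single i (Real.sqrt (w i))⁻¹ with hu
    set c : Fin n → ℝ := H⁻¹ *ᵥ (Mᵀ *ᵥ u) with hc
    have hHc : H *ᵥ c = Mᵀ *ᵥ u := by
      rw [hc, Matrix.mulVec_mulVec, hHinv, Matrix.one_mulVec]
    have huM : u ⬝ᵥ (M *ᵥ Δ) = (A *ᵥ Δ) i / s i := by
      rw [hu, single_dotProduct]
      simp only [hMv Δ]
      field_simp
      exact mul_div_mul_left _ _ (hsqw i)
    have h1 : (A *ᵥ Δ) i / s i = (M *ᵥ c) ⬝ᵥ (M *ᵥ Δ) := by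
      have he : c ⬝ᵥ (H *ᵥ Δ) = u ⬝ᵥ (M *ᵥ Δ) := by
        rw [Matrix.dotProduct_mulVec c H Δ, ← Matrix.mulVec_transpose, hHsym, hHc,
          Matrix.mulVec_transpose, ← Matrix.dotProduct_mulVec]
      have h2 : c ⬝ᵥ (H *ᵥ Δ) = (M *ᵥ c) ⬝ᵥ (M *ᵥ Δ) := by
        rw [hHM, ← Matrix.mulVec_mulVec, Matrix.dotProduct_mulVec, Matrix.vecMul_transpose]
      rw [← huM, ← he, h2]
    have hPuc : P *ᵥ u = M *ᵥ c := by
      rw [hPM, ← Matrix.mulVec_mulVec, ← Matrix.mulVec_mulVec, hc]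
    have hPu : u ⬝ᵥ (P *ᵥ u) = (M *ᵥ c) ⬝ᵥ (M *ᵥ c) := by
      rw [hPuc, ← hquad c, hHc, Matrix.dotProduct_mulVec c Mᵀ u, Matrix.vecMul_transpose,
        dotProduct_comm (M *ᵥ c) u]
    calc |(A *ᵥ Δ) i / s i| = |(M *ᵥ c) ⬝ᵥ (M *ᵥ Δ)| := by rw [h1]
      _ ≤ Real.sqrt ((M *ᵥ c) ⬝ᵥ (M *ᵥ c)) * Real.sqrt ((M *ᵥ Δ) ⬝ᵥ (M *ᵥ Δ)) := aux_cs _ _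
      _ = Real.sqrt (Δ ⬝ᵥ (H *ᵥ Δ)) * Real.sqrt (u ⬝ᵥ (P *ᵥ u)) := by
          rw [hPu, hquad Δ]; ring
      _ ≤ _ := by
          refine mul_le_mul_of_nonneg_left ?_ (Real.sqrt_nonneg _)
          exact Finset.le_sup' (f := fun i => Real.sqrt
            ((Pi.single i (Real.sqrt (w i))⁻¹ : Fin m → ℝ) ⬝ᵥ
              (P *ᵥ Pi.single i (Real.sqrt (w i))⁻¹))) (Finset.mem_univ i)
  · intro h i
    have hi := (abs_lt.mp (h i)).1
    have hsi := hs i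
    have h2 : -1 * s i < (A *ᵥ Δ) i := (lt_div_iff₀ hsi).mp hi
    have h3 : (A *ᵥ x) i = s i + b i := by
      have := congrFun hsdef i
      simp only [Pi.sub_apply] at this
      linarith
    rw [Matrix.mulVec_add, Pi.add_apply, h3]
    linarith
end

section
/- In the weighted-path setting, for all feasible (x, w) with s = Ax − b > 0, w > 0, and for t ≥ 0, α ≥ 0, the centrality measure δ_t(x,w) := ‖t c − Aᵀ S^{-1} w‖_{(Aᵀ S^{-1} W S^{-1} A)^{-1}} satisfies δ_{(1+α)t}(x,w) ≤ (1+α) δ_t(x,w) + α sqrt(‖w‖₁). -/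
open Matrix

section Aux

variable {n : ℕ}

lemma aux_dot_eq (M : Matrix (Fin n) (Fin n) ℝ) (hM : Mᵀ = M) (v : Fin n → ℝ) :
    v ⬝ᵥ ((M * M) *ᵥ v) = (M *ᵥ v) ⬝ᵥ (M *ᵥ v) := by
  rw [← Matrix.mulVec_mulVec, Matrix.dotProduct_mulVec, ← Matrix.vecMul_transpose, hM]

lemma aux_dot_tmul {m : ℕ} (B : Matrix (Fin m) (Fin n) ℝ) (y : Fin n → ℝ) :
    y ⬝ᵥ ((Bᵀ * B) *ᵥ y) = (B *ᵥ y) ⬝ᵥ (B *ᵥ y) := by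
  rw [← Matrix.mulVec_mulVec, Matrix.dotProduct_mulVec, Matrix.vecMul_transpose]

lemma aux_dot_self_nonneg (v : Fin n → ℝ) : 0 ≤ v ⬝ᵥ v :=
  Finset.sum_nonneg fun i _ => mul_self_nonneg _

lemma aux_dot_self_pos (v : Fin n → ℝ) (hv : v ≠ 0) : 0 < v ⬝ᵥ v := by
  obtain ⟨j, hj⟩ := Function.ne_iff.mp hv
  show 0 < ∑ i, v i * v i
  apply Finset.sum_pos' (fun i _ => mul_self_nonneg _)
  exact ⟨j, Finset.mem_univ j, mul_self_pos.mpr hj⟩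

lemma aux_sqrt_dot_eq_norm (u : Fin n → ℝ) :
    Real.sqrt (u ⬝ᵥ u) = ‖(WithLp.equiv 2 (Fin n → ℝ)).symm u‖ := by
  rw [EuclideanSpace.norm_eq]
  congr 1
  simp [dotProduct, Real.norm_eq_abs, sq_abs, pow_two]

end Aux

theorem weighted_path_t_step {m n : ℕ} (A : Matrix (Fin m) (Fin n) ℝ)
    (hrank : A.rank = n) (b : Fin m → ℝ) (c : Fin n → ℝ)
    (x : Fin n → ℝ) (w : Fin m → ℝ) (s : Fin m → ℝ) (hsdef : s = A *ᵥ x - b)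
    (hs : ∀ i, 0 < s i) (hw : ∀ i, 0 < w i) (t α : ℝ) (ht : 0 ≤ t) (hα : 0 ≤ α)
    (H : Matrix (Fin n) (Fin n) ℝ)
    (hH : H = Aᵀ * (Matrix.diagonal s)⁻¹ * Matrix.diagonal w * (Matrix.diagonal s)⁻¹ * A)
    (δ : ℝ → ℝ)
    (hδ : δ = fun t' =>
      Real.sqrt ((t' • c - Aᵀ *ᵥ fun i => w i / s i) ⬝ᵥ
        (H⁻¹ *ᵥ (t' • c - Aᵀ *ᵥ fun i => w i / s i)))) :
    δ ((1 + α) * t) ≤ (1 + α) * δ t + α * Real.sqrt (∑ i, w i) := by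
  classical
  -- injectivity of A from the rank hypothesis
  have hAinj : ∀ y : Fin n → ℝ, A *ᵥ y = 0 → y = 0 := by
    intro y hy
    have h1 := A.mulVecLin.finrank_range_add_finrank_ker
    rw [Matrix.rank] at hrank
    rw [hrank, Module.finrank_fin_fun] at h1
    have hker0 : Module.finrank ℝ (LinearMap.ker A.mulVecLin) = 0 := by omega
    have hker : LinearMap.ker A.mulVecLin = ⊥ := Submodule.finrank_eq_zero.mp hker0
    have : y ∈ LinearMap.ker A.mulVecLin := by
      simp [LinearMap.mem_ker, Matrix.mulVecLin_apply, hy]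
    rw [hker] at this
    simpa using this
  -- setup
  set d : Fin m → ℝ := fun i => Real.sqrt (w i) / s i with hd
  set B : Matrix (Fin m) (Fin n) ℝ := Matrix.diagonal d * A with hB
  have hsne : ∀ i, s i ≠ 0 := fun i => (hs i).ne'
  have hdd : ∀ i, d i * d i = (s i)⁻¹ * (w i * (s i)⁻¹) := by
    intro i
    have hsq : Real.sqrt (w i) * Real.sqrt (w i) = w i := Real.mul_self_sqrt (hw i).le
    show Real.sqrt (w i) / s i * (Real.sqrt (w i) / s i) = _
    rw [div_mul_div_comm, hsq]
    field_simp
  -- H = Bᵀ * B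
  have hsinv : (Matrix.diagonal s)⁻¹ = Matrix.diagonal (fun i => (s i)⁻¹) := by
    apply Matrix.inv_eq_right_inv
    rw [Matrix.diagonal_mul_diagonal]
    have h1 : (fun i => s i * (s i)⁻¹) = (fun _ => (1 : ℝ)) :=
      funext fun i => mul_inv_cancel₀ (hsne i)
    rw [h1]
    exact Matrix.diagonal_one
  have hHB : H = Bᵀ * B := by
    rw [hH, hB, hsinv, Matrix.transpose_mul, Matrix.diagonal_transpose]
    simp only [Matrix.mul_assoc]
    congr 1
    rw [← Matrix.mul_assoc, ← Matrix.mul_assoc, Matrix.diagonal_mul_diagonal,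
      Matrix.diagonal_mul_diagonal, ← Matrix.mul_assoc, Matrix.diagonal_mul_diagonal]
    have harg : (fun i => (s i)⁻¹ * w i * (s i)⁻¹) = fun i => d i * d i := by
      funext i
      rw [hdd i]
      ring
    rw [harg]
  -- B *ᵥ y = 0 → y = 0
  have hBinj : ∀ y : Fin n → ℝ, B *ᵥ y = 0 → y = 0 := by
    intro y hy
    apply hAinj
    funext i
    have h1 := congrFun hy i
    rw [hB, ← Matrix.mulVec_mulVec] at h1
    rw [Matrix.mulVec_diagonal] at h1
    have hdne : d i ≠ 0 := by
      have : 0 < Real.sqrt (w i) := Real.sqrt_pos.mpr (hw i)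
      exact div_ne_zero this.ne' (hsne i)
    simpa [hdne] using h1
  -- H is positive definite
  have hHpd : H.PosDef := by
    refine Matrix.posDef_iff_dotProduct_mulVec.mpr ⟨?_, ?_⟩
    · show Hᴴ = H
      rw [hHB]
      ext i j
      simp [Matrix.conjTranspose_apply, Matrix.mul_apply, mul_comm]
    · intro y hy
      have h1 : star y = y := by simp
      rw [h1, hHB, aux_dot_tmul]
      exact aux_dot_self_pos _ (fun h => hy (hBinj y h))
  have hdet : H.det ≠ 0 := hHpd.det_pos.ne'
  have hHiH : H⁻¹ * H = 1 := Matrix.nonsing_inv_mul H hdet.isUnit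
  have hHips : (H⁻¹).PosSemidef := hHpd.inv.posSemidef
  obtain ⟨M, hMM, hMherm⟩ : ∃ M : Matrix (Fin n) (Fin n) ℝ, M * M = H⁻¹ ∧ M.IsHermitian := by
    open scoped MatrixOrder Matrix.Norms.L2Operator in
    exact ⟨CFC.sqrt (H⁻¹), CFC.sqrt_mul_sqrt_self _ hHips.nonneg,
      (CFC.sqrt_nonneg _).posSemidef.isHermitian⟩
  have hMsym : Mᵀ = M := by
    have := hMherm
    rw [Matrix.IsHermitian] at this
    ext i j
    have := congrFun (congrFun this i) j
    simpa [Matrix.conjTranspose_apply] using this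
  have hHisym : (H⁻¹)ᵀ = H⁻¹ := by
    have := hHpd.inv.isHermitian
    rw [Matrix.IsHermitian] at this
    ext i j
    have := congrFun (congrFun this i) j
    simpa [Matrix.conjTranspose_apply] using this
  -- the norm expression
  have qnorm : ∀ v : Fin n → ℝ,
      Real.sqrt (v ⬝ᵥ (H⁻¹ *ᵥ v)) = ‖(WithLp.equiv 2 (Fin n → ℝ)).symm (M *ᵥ v)‖ := by
    intro v
    rw [← hMM, aux_dot_eq M hMsym v, aux_sqrt_dot_eq_norm]
  set g : Fin n → ℝ := Aᵀ *ᵥ fun i => w i / s i with hg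
  set v₀ : Fin m → ℝ := fun i => Real.sqrt (w i) with hv₀
  have hgBv : g = Bᵀ *ᵥ v₀ := by
    have hdv : (Matrix.diagonal d *ᵥ v₀) = fun i => w i / s i := by
      funext i
      rw [Matrix.mulVec_diagonal]
      show Real.sqrt (w i) / s i * Real.sqrt (w i) = w i / s i
      rw [div_mul_eq_mul_div, Real.mul_self_sqrt (hw i).le]
    rw [hg, hB, Matrix.transpose_mul, Matrix.diagonal_transpose, ← Matrix.mulVec_mulVec, hdv]
  -- projection bound : g ⬝ᵥ H⁻¹ g ≤ ∑ w
  have hproj : g ⬝ᵥ (H⁻¹ *ᵥ g) ≤ ∑ i, w i := by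
    set P : Matrix (Fin m) (Fin m) ℝ := B * H⁻¹ * Bᵀ with hP
    have h1 : g ⬝ᵥ (H⁻¹ *ᵥ g) = v₀ ⬝ᵥ (P *ᵥ v₀) := by
      rw [hgBv, hP, ← Matrix.mulVec_mulVec, ← Matrix.mulVec_mulVec,
        Matrix.dotProduct_mulVec v₀ B, ← Matrix.mulVec_transpose]
    have hPsym : Pᵀ = P := by
      simp [hP, Matrix.transpose_mul, hHisym, Matrix.mul_assoc]
    have hPP : P * P = P := by
      rw [hP]
      have : B * H⁻¹ * Bᵀ * (B * H⁻¹ * Bᵀ) = B * (H⁻¹ * (Bᵀ * B) * H⁻¹) * Bᵀ := by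
        simp only [Matrix.mul_assoc]
      rw [this, ← hHB, hHiH, Matrix.one_mul]
    set Q : Matrix (Fin m) (Fin m) ℝ := 1 - P with hQ
    have hQsym : Qᵀ = Q := by rw [hQ, Matrix.transpose_sub, Matrix.transpose_one, hPsym]
    have hQQ : Q * Q = Q := by
      rw [hQ, Matrix.sub_mul, Matrix.mul_sub, Matrix.mul_sub, hPP]
      simp only [Matrix.one_mul, Matrix.mul_one]
      abel
    have h2 : 0 ≤ v₀ ⬝ᵥ (Q *ᵥ v₀) := by
      rw [← hQQ, aux_dot_eq Q hQsym v₀]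
      exact aux_dot_self_nonneg _
    have h3 : v₀ ⬝ᵥ (Q *ᵥ v₀) = v₀ ⬝ᵥ v₀ - v₀ ⬝ᵥ (P *ᵥ v₀) := by
      rw [hQ, Matrix.sub_mulVec, Matrix.one_mulVec, dotProduct_sub]
    have h4 : v₀ ⬝ᵥ v₀ = ∑ i, w i := by
      simp only [dotProduct, hv₀]
      exact Finset.sum_congr rfl fun i _ => Real.mul_self_sqrt (hw i).le
    rw [h1]
    have := h2
    rw [h3, h4] at this
    linarith
  -- final assembly
  subst hδ
  simp only
  set e := (WithLp.equiv 2 (Fin n → ℝ)).symm with he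
  have hsplit : ((1 + α) * t) • c - g = (1 + α) • (t • c - g) + α • g := by
    funext i
    simp [Pi.smul_apply, smul_eq_mul]
    ring
  rw [hsplit, qnorm, qnorm]
  have hmv : M *ᵥ ((1 + α) • (t • c - g) + α • g)
      = (1 + α) • (M *ᵥ (t • c - g)) + α • (M *ᵥ g) := by
    rw [Matrix.mulVec_add, Matrix.mulVec_smul, Matrix.mulVec_smul]
  rw [hmv]
  have hea : e ((1 + α) • (M *ᵥ (t • c - g)) + α • (M *ᵥ g))
      = (1 + α) • e (M *ᵥ (t • c - g)) + α • e (M *ᵥ g) := by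
    simp [he]
  rw [hea]
  have htri := norm_add_le ((1 + α) • e (M *ᵥ (t • c - g))) (α • e (M *ᵥ g))
  have hn1 : ‖(1 + α) • e (M *ᵥ (t • c - g))‖ = (1 + α) * ‖e (M *ᵥ (t • c - g))‖ := by
    rw [norm_smul, Real.norm_eq_abs, abs_of_nonneg (by linarith)]
  have hn2 : ‖α • e (M *ᵥ g)‖ = α * ‖e (M *ᵥ g)‖ := by
    rw [norm_smul, Real.norm_eq_abs, abs_of_nonneg hα]
  have hgbound : ‖e (M *ᵥ g)‖ ≤ Real.sqrt (∑ i, w i) := by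
    rw [← qnorm]
    exact Real.sqrt_le_sqrt hproj
  calc ‖(1 + α) • e (M *ᵥ (t • c - g)) + α • e (M *ᵥ g)‖
      ≤ ‖(1 + α) • e (M *ᵥ (t • c - g))‖ + ‖α • e (M *ᵥ g)‖ := htri
    _ = (1 + α) * ‖e (M *ᵥ (t • c - g))‖ + α * ‖e (M *ᵥ g)‖ := by rw [hn1, hn2]
    _ ≤ (1 + α) * ‖e (M *ᵥ (t • c - g))‖ + α * Real.sqrt (∑ i, w i) := by
        have := mul_le_mul_of_nonneg_left hgbound hα
        linarith
end

section
/- Let H_old = Aᵀ S^{-1} W_old S^{-1} A and H_new = Aᵀ S^{-1} W_new S^{-1} A where W_old, W_new are positive diagonal with ε := ‖log(w_new) − log(w_old)‖_∞ ≤ 1/2 (coordinatewise logs of the diagonals). Then with δ_t(x, w) := ‖t c − Aᵀ S^{-1} w‖_{H(w)^{-1}}, one has δ_t(x, w_new) ≤ (1+ε)[δ_t(x, w_old) + ‖log(w_new) − log(w_old)‖_{W_old}], where ‖v‖_{W} := sqrt(Σ_i W_{ii} v_i²). -/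
open Matrix

private lemma star_pi_real {k : ℕ} (v : Fin k → ℝ) : star v = v :=
  funext fun _ => star_trivial _

private lemma dp_symm {k : ℕ} {M : Matrix (Fin k) (Fin k) ℝ} (hM : Mᵀ = M)
    (v u : Fin k → ℝ) : v ⬝ᵥ M *ᵥ u = u ⬝ᵥ M *ᵥ v := by
  rw [Matrix.dotProduct_mulVec, ← Matrix.mulVec_transpose, hM, dotProduct_comm]

private lemma herm_transpose {k : ℕ} {M : Matrix (Fin k) (Fin k) ℝ}
    (h : M.IsHermitian) : Mᵀ = M := by
  rw [← Matrix.conjTranspose_eq_transpose_of_trivial]; exact h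

private lemma psd_nonneg {k : ℕ} {M : Matrix (Fin k) (Fin k) ℝ} (hM : M.PosSemidef)
    (v : Fin k → ℝ) : 0 ≤ v ⬝ᵥ M *ᵥ v := by
  have := hM.dotProduct_mulVec_nonneg v
  rwa [star_pi_real] at this

private lemma psd_cauchy_schwarz {k : ℕ} {M : Matrix (Fin k) (Fin k) ℝ}
    (hM : M.PosSemidef) (v u : Fin k → ℝ) :
    (v ⬝ᵥ M *ᵥ u) ^ 2 ≤ (v ⬝ᵥ M *ᵥ v) * (u ⬝ᵥ M *ᵥ u) := by
  have hMt : Mᵀ = M := herm_transpose hM.1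
  have key : ∀ r : ℝ, 0 ≤ (u ⬝ᵥ M *ᵥ u) * (r * r) + (2 * (v ⬝ᵥ M *ᵥ u)) * r
      + (v ⬝ᵥ M *ᵥ v) := by
    intro r
    have h0 := psd_nonneg hM (v + r • u)
    have hexp : (v + r • u) ⬝ᵥ M *ᵥ (v + r • u)
        = (u ⬝ᵥ M *ᵥ u) * (r * r) + (2 * (v ⬝ᵥ M *ᵥ u)) * r + (v ⬝ᵥ M *ᵥ v) := by
      simp only [Matrix.mulVec_add, Matrix.mulVec_smul, add_dotProduct,
        smul_dotProduct, dotProduct_add, dotProduct_smul,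
        smul_eq_mul]
      linear_combination (r : ℝ) * dp_symm hMt u v
    rwa [hexp] at h0
  have hd := discrim_le_zero key
  rw [discrim] at hd
  nlinarith [hd]

private lemma psd_sqrt_add {k : ℕ} {M : Matrix (Fin k) (Fin k) ℝ} (hM : M.PosSemidef)
    (v u : Fin k → ℝ) :
    Real.sqrt ((v + u) ⬝ᵥ M *ᵥ (v + u))
      ≤ Real.sqrt (v ⬝ᵥ M *ᵥ v) + Real.sqrt (u ⬝ᵥ M *ᵥ u) := by
  have hMt : Mᵀ = M := herm_transpose hM.1
  have hv : 0 ≤ v ⬝ᵥ M *ᵥ v := psd_nonneg hM v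
  have hu : 0 ≤ u ⬝ᵥ M *ᵥ u := psd_nonneg hM u
  have hcs := psd_cauchy_schwarz hM v u
  have hmid : v ⬝ᵥ M *ᵥ u ≤ Real.sqrt (v ⬝ᵥ M *ᵥ v) * Real.sqrt (u ⬝ᵥ M *ᵥ u) := by
    rw [← Real.sqrt_mul hv]
    calc v ⬝ᵥ M *ᵥ u ≤ |v ⬝ᵥ M *ᵥ u| := le_abs_self _
      _ = Real.sqrt ((v ⬝ᵥ M *ᵥ u) ^ 2) := (Real.sqrt_sq_eq_abs _).symm
      _ ≤ Real.sqrt ((v ⬝ᵥ M *ᵥ v) * (u ⬝ᵥ M *ᵥ u)) := Real.sqrt_le_sqrt hcs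
  have hexp : (v + u) ⬝ᵥ M *ᵥ (v + u)
      = (v ⬝ᵥ M *ᵥ v) + 2 * (v ⬝ᵥ M *ᵥ u) + (u ⬝ᵥ M *ᵥ u) := by
    simp only [Matrix.mulVec_add, add_dotProduct, dotProduct_add]
    linear_combination dp_symm hMt u v
  have hle : (v + u) ⬝ᵥ M *ᵥ (v + u)
      ≤ (Real.sqrt (v ⬝ᵥ M *ᵥ v) + Real.sqrt (u ⬝ᵥ M *ᵥ u)) ^ 2 := by
    rw [hexp]
    have e1 : Real.sqrt (v ⬝ᵥ M *ᵥ v) ^ 2 = v ⬝ᵥ M *ᵥ v := Real.sq_sqrt hv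
    have e2 : Real.sqrt (u ⬝ᵥ M *ᵥ u) ^ 2 = u ⬝ᵥ M *ᵥ u := Real.sq_sqrt hu
    nlinarith [hmid]
  calc Real.sqrt ((v + u) ⬝ᵥ M *ᵥ (v + u))
      ≤ Real.sqrt ((Real.sqrt (v ⬝ᵥ M *ᵥ v) + Real.sqrt (u ⬝ᵥ M *ᵥ u)) ^ 2) :=
        Real.sqrt_le_sqrt hle
    _ = _ := Real.sqrt_sq (by positivity)

private lemma quadform_eq {m n : ℕ} (B : Matrix (Fin m) (Fin n) ℝ) (w : Fin m → ℝ)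
    (v : Fin n → ℝ) :
    v ⬝ᵥ (Bᵀ * Matrix.diagonal w * B) *ᵥ v = ∑ i, w i * ((B *ᵥ v) i) ^ 2 := by
  rw [Matrix.mul_assoc, ← Matrix.mulVec_mulVec, Matrix.dotProduct_mulVec,
    Matrix.vecMul_transpose, ← Matrix.mulVec_mulVec]
  simp only [dotProduct, Matrix.mulVec_diagonal]
  exact Finset.sum_congr rfl fun i _ => by ring

private lemma hW_posdef {m n : ℕ} (B : Matrix (Fin m) (Fin n) ℝ)
    (hB : ∀ v, B *ᵥ v = 0 → v = 0) (w : Fin m → ℝ) (hw : ∀ i, 0 < w i) :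
    (Bᵀ * Matrix.diagonal w * B).PosDef := by
  rw [Matrix.posDef_iff_dotProduct_mulVec]
  constructor
  · rw [Matrix.IsHermitian, Matrix.conjTranspose_eq_transpose_of_trivial,
      Matrix.transpose_mul, Matrix.transpose_mul, Matrix.transpose_transpose,
      Matrix.diagonal_transpose, Matrix.mul_assoc]
  · intro x hx
    rw [star_pi_real, quadform_eq]
    have hBx : B *ᵥ x ≠ 0 := fun h => hx (hB x h)
    obtain ⟨i, hi⟩ := Function.ne_iff.mp hBx
    refine Finset.sum_pos' (fun j _ => mul_nonneg (hw j).le (sq_nonneg _))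
      ⟨i, Finset.mem_univ i, ?_⟩
    have hne : (B *ᵥ x) i ≠ 0 := by simpa using hi
    exact mul_pos (hw i) (pow_two_pos_of_ne_zero hne)

private lemma q_comp {k : ℕ} {H1 H2 : Matrix (Fin k) (Fin k) ℝ}
    (h1 : H1.PosDef) (h2 : H2.PosDef) {α : ℝ} (hα : 0 < α)
    (hle : ∀ y, α * (y ⬝ᵥ H1 *ᵥ y) ≤ y ⬝ᵥ H2 *ᵥ y) (v : Fin k → ℝ) :
    v ⬝ᵥ H2⁻¹ *ᵥ v ≤ α⁻¹ * (v ⬝ᵥ H1⁻¹ *ᵥ v) := by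
  have hd1 : IsUnit H1.det := (Matrix.isUnit_iff_isUnit_det _).mp h1.isUnit
  have hd2 : IsUnit H2.det := (Matrix.isUnit_iff_isUnit_det _).mp h2.isUnit
  set u := H2⁻¹ *ᵥ v with hu
  set x := H1⁻¹ *ᵥ v with hx
  have hH2u : H2 *ᵥ u = v := by
    rw [hu, Matrix.mulVec_mulVec, Matrix.mul_nonsing_inv _ hd2, Matrix.one_mulVec]
  have hH1x : H1 *ᵥ x = v := by
    rw [hx, Matrix.mulVec_mulVec, Matrix.mul_nonsing_inv _ hd1, Matrix.one_mulVec]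
  have hq2 : 0 ≤ v ⬝ᵥ u := psd_nonneg h2.inv.posSemidef v
  have hq1 : 0 ≤ v ⬝ᵥ x := psd_nonneg h1.inv.posSemidef v
  have hcs := psd_cauchy_schwarz h1.posSemidef x u
  have e1 : x ⬝ᵥ H1 *ᵥ u = v ⬝ᵥ u := by
    rw [dp_symm (herm_transpose h1.1) x u, hH1x, dotProduct_comm]
  have e2 : x ⬝ᵥ H1 *ᵥ x = v ⬝ᵥ x := by
    conv_lhs => rw [hH1x]
    rw [dotProduct_comm]
  have e3 : u ⬝ᵥ H1 *ᵥ u ≤ α⁻¹ * (v ⬝ᵥ u) := by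
    have := hle u
    rw [hH2u] at this
    have h4 : u ⬝ᵥ v = v ⬝ᵥ u := dotProduct_comm _ _
    rw [h4] at this
    rw [← le_div_iff₀' hα] at this
    simpa [div_eq_inv_mul] using this
  rw [e1, e2] at hcs
  show v ⬝ᵥ u ≤ α⁻¹ * (v ⬝ᵥ x)
  rcases eq_or_lt_of_le hq2 with h0 | h0
  · rw [← h0]
    exact mul_nonneg (inv_nonneg.mpr hα.le) hq1
  · have huu : 0 ≤ u ⬝ᵥ H1 *ᵥ u := psd_nonneg h1.posSemidef u
    nlinarith [hcs, e3, h0]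

private lemma q_proj {m n : ℕ} (B : Matrix (Fin m) (Fin n) ℝ)
    (hB : ∀ v, B *ᵥ v = 0 → v = 0) (w : Fin m → ℝ) (hw : ∀ i, 0 < w i)
    (u : Fin m → ℝ) :
    (Bᵀ *ᵥ u) ⬝ᵥ (Bᵀ * Matrix.diagonal w * B)⁻¹ *ᵥ (Bᵀ *ᵥ u) ≤ ∑ i, u i ^ 2 / w i := by
  set H := Bᵀ * Matrix.diagonal w * B with hH
  have hpd : H.PosDef := hW_posdef B hB w hw
  have hd : IsUnit H.det := (Matrix.isUnit_iff_isUnit_det _).mp hpd.isUnit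
  set v := Bᵀ *ᵥ u with hv
  set x := H⁻¹ *ᵥ v with hxdef
  have hq0 : 0 ≤ v ⬝ᵥ x := psd_nonneg hpd.inv.posSemidef v
  have hHx : H *ᵥ x = v := by
    rw [hxdef, Matrix.mulVec_mulVec, Matrix.mul_nonsing_inv _ hd, Matrix.one_mulVec]
  -- q = ∑ i, (B *ᵥ x) i * u i
  have hq : v ⬝ᵥ x = ∑ i, (B *ᵥ x) i * u i := by
    rw [hv, dotProduct_comm, Matrix.dotProduct_mulVec, Matrix.vecMul_transpose]
    rfl
  -- ∑ w i * (B *ᵥ x) i ^2 = q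
  have hsum : ∑ i, w i * ((B *ᵥ x) i) ^ 2 = v ⬝ᵥ x := by
    rw [← quadform_eq B w x, ← hH]
    conv_lhs => rw [hHx]
    rw [dotProduct_comm]
  have hcs : (∑ i, (B *ᵥ x) i * u i) ^ 2
      ≤ (∑ i, w i * ((B *ᵥ x) i) ^ 2) * ∑ i, u i ^ 2 / w i := by
    have := Finset.sum_mul_sq_le_sq_mul_sq Finset.univ
      (fun i => Real.sqrt (w i) * (B *ᵥ x) i) (fun i => u i / Real.sqrt (w i))
    have el : ∀ i : Fin m, (Real.sqrt (w i) * (B *ᵥ x) i) * (u i / Real.sqrt (w i))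
        = (B *ᵥ x) i * u i := by
      intro i
      have : Real.sqrt (w i) ≠ 0 := ne_of_gt (Real.sqrt_pos.mpr (hw i))
      field_simp
    have e2 : ∀ i : Fin m, (Real.sqrt (w i) * (B *ᵥ x) i) ^ 2 = w i * ((B *ᵥ x) i) ^ 2 := by
      intro i
      rw [mul_pow, Real.sq_sqrt (hw i).le]
    have e3 : ∀ i : Fin m, (u i / Real.sqrt (w i)) ^ 2 = u i ^ 2 / w i := by
      intro i
      rw [div_pow, Real.sq_sqrt (hw i).le]
    simp only [el, e2, e3] at this
    exact this
  have hnn : 0 ≤ ∑ i, u i ^ 2 / w i :=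
    Finset.sum_nonneg fun i _ => div_nonneg (sq_nonneg _) (hw i).le
  rw [hq] at hq0
  rw [hsum, ← hq] at hcs
  show v ⬝ᵥ x ≤ _
  rw [hq]
  rcases eq_or_lt_of_le hq0 with h0 | h0
  · rw [← h0]; exact hnn
  · nlinarith [hcs, h0]

private lemma exp_le_one_add_sq {a : ℝ} (h0 : 0 ≤ a) (h2 : a ≤ 1/2) :
    Real.exp a ≤ (1 + a) ^ 2 := by
  have h1 : 1 - a ≤ Real.exp (-a) := by linarith [Real.add_one_le_exp (-a)]
  have h3 : Real.exp a * Real.exp (-a) = 1 := by rw [← Real.exp_add]; simp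
  have h4 : Real.exp a * (1 - a) ≤ 1 := by
    calc Real.exp a * (1 - a) ≤ Real.exp a * Real.exp (-a) :=
          mul_le_mul_of_nonneg_left h1 (Real.exp_pos a).le
      _ = 1 := h3
  have hpos : 0 < 1 - a := by linarith
  have ha3 : 0 ≤ a * (1 - a - a ^ 2) := by nlinarith
  nlinarith [h4, ha3, hpos]

private lemma scalar_bound {x ε : ℝ} (hx : |x| ≤ ε) (hε : ε ≤ 1/2) :
    (Real.exp x - 1) ^ 2 ≤ (1 + ε) ^ 2 * x ^ 2 * Real.exp x := by
  have hε0 : 0 ≤ ε := le_trans (abs_nonneg x) hx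
  have hxu : x ≤ ε := le_of_abs_le hx
  have hxl : -ε ≤ x := neg_le_of_abs_le hx
  rcases le_or_gt 0 x with hx0 | hx0
  · have hy1 : 1 + x ≤ Real.exp x := by linarith [Real.add_one_le_exp x]
    have h1 : 1 - x ≤ Real.exp (-x) := by linarith [Real.add_one_le_exp (-x)]
    have h3 : Real.exp x * Real.exp (-x) = 1 := by rw [← Real.exp_add]; simp
    have hy2 : Real.exp x - 1 ≤ x * Real.exp x := by
      nlinarith [mul_le_mul_of_nonneg_left h1 (Real.exp_pos x).le, h3]
    have hy3 : Real.exp x ≤ (1 + x) ^ 2 := exp_le_one_add_sq hx0 (le_trans hxu hε)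
    have hy4 : (1 + x) ^ 2 ≤ (1 + ε) ^ 2 := by nlinarith
    have h5 : (Real.exp x - 1) ^ 2 ≤ (x * Real.exp x) ^ 2 := by
      have h6 : 0 ≤ Real.exp x - 1 := by linarith
      nlinarith [hy2, h6]
    have h7 : x ^ 2 * Real.exp x * Real.exp x ≤ x ^ 2 * Real.exp x * (1 + ε) ^ 2 :=
      mul_le_mul_of_nonneg_left (le_trans hy3 hy4)
        (mul_nonneg (sq_nonneg x) (Real.exp_pos x).le)
    nlinarith [h5, h7]
  · have hy1 : 1 + x ≤ Real.exp x := by linarith [Real.add_one_le_exp x]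
    have hyle1 : Real.exp x ≤ 1 := Real.exp_le_one_iff.mpr hx0.le
    have h5 : (Real.exp x - 1) ^ 2 ≤ x ^ 2 := by nlinarith
    have hkey : 1 ≤ (1 + ε) ^ 2 * Real.exp x := by
      have ha : Real.exp (-ε) ≤ Real.exp x := Real.exp_le_exp.mpr hxl
      have hb : Real.exp ε ≤ (1 + ε) ^ 2 := exp_le_one_add_sq hε0 hε
      have hc : Real.exp ε * Real.exp (-ε) = 1 := by rw [← Real.exp_add]; simp
      have := mul_le_mul hb ha (Real.exp_pos (-ε)).le (by positivity)
      rw [hc] at this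
      exact this
    nlinarith [h5, mul_le_mul_of_nonneg_left hkey (sq_nonneg x)]
theorem centrality_weight_change {m n : ℕ} (A : Matrix (Fin m) (Fin n) ℝ)
    (hrank : A.rank = n) (c : Fin n → ℝ) (t : ℝ) (ht : 0 < t)
    (s wOld wNew : Fin m → ℝ)
    (hs : ∀ i, 0 < s i) (hwOld : ∀ i, 0 < wOld i) (hwNew : ∀ i, 0 < wNew i)
    (ε : ℝ) (hε : ε ≤ 1 / 2)
    (hlog : ∀ i, |Real.log (wNew i) - Real.log (wOld i)| ≤ ε)
    (H : (Fin m → ℝ) → Matrix (Fin n) (Fin n) ℝ)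
    (hH : H = fun w =>
      Aᵀ * (Matrix.diagonal s)⁻¹ * Matrix.diagonal w * (Matrix.diagonal s)⁻¹ * A)
    (δ : (Fin m → ℝ) → ℝ)
    (hδ : δ = fun w =>
      Real.sqrt ((t • c - Aᵀ *ᵥ fun i => w i / s i) ⬝ᵥ
        ((H w)⁻¹ *ᵥ (t • c - Aᵀ *ᵥ fun i => w i / s i)))) :
    δ wNew ≤ (1 + ε) *
      (δ wOld + Real.sqrt (∑ i, wOld i * (Real.log (wNew i) - Real.log (wOld i)) ^ 2)) := by
  subst hH
  subst hδ
  dsimp only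
  rcases Nat.eq_zero_or_pos m with hm | hm
  · subst hm
    have hn : n = 0 := by
      have h1 := A.rank_le_card_height
      simp only [Fintype.card_fin, Nat.le_zero] at h1
      omega
    subst hn
    simp [dotProduct]
  · have hε0 : 0 ≤ ε := le_trans (abs_nonneg _) (hlog ⟨0, hm⟩)
    have h1ε : (0:ℝ) ≤ 1 + ε := by linarith
    have hwNe : ∀ i, wNew i = wOld i * Real.exp (Real.log (wNew i) - Real.log (wOld i)) := by
      intro i
      rw [Real.exp_sub, Real.exp_log (hwNew i), Real.exp_log (hwOld i),
        mul_comm, div_mul_cancel₀ _ (hwOld i).ne']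
    set B := (Matrix.diagonal s)⁻¹ * A with hBdef
    have hsinv : (Matrix.diagonal s)⁻¹ = Matrix.diagonal (fun i => (s i)⁻¹) := by
      apply Matrix.inv_eq_right_inv
      rw [Matrix.diagonal_mul_diagonal]
      have hone : (fun i => s i * (s i)⁻¹) = fun _ => (1:ℝ) :=
        funext fun i => mul_inv_cancel₀ (hs i).ne'
      rw [hone, Matrix.diagonal_one]
    have hBT : Bᵀ = Aᵀ * (Matrix.diagonal s)⁻¹ := by
      rw [hBdef, Matrix.transpose_mul, hsinv, Matrix.diagonal_transpose, ← hsinv]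
    have hHeq : ∀ w : Fin m → ℝ,
        Aᵀ * (Matrix.diagonal s)⁻¹ * Matrix.diagonal w * (Matrix.diagonal s)⁻¹ * A
          = Bᵀ * Matrix.diagonal w * B := by
      intro w
      rw [hBT, hBdef]
      simp only [Matrix.mul_assoc]
    have hgeq : ∀ w : Fin m → ℝ, (Aᵀ *ᵥ fun i => w i / s i) = Bᵀ *ᵥ w := by
      intro w
      have hvec : (fun i => w i / s i) = (Matrix.diagonal fun i => (s i)⁻¹) *ᵥ w := by
        funext i
        rw [Matrix.mulVec_diagonal, div_eq_inv_mul]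
      rw [hBT, ← Matrix.mulVec_mulVec, hsinv, ← hvec]
    have hBinj : ∀ v, B *ᵥ v = 0 → v = 0 := by
      intro v hv
      have hAv : A *ᵥ v = 0 := by
        rw [hBdef, ← Matrix.mulVec_mulVec, hsinv] at hv
        funext i
        have h2 := congrFun hv i
        rw [Matrix.mulVec_diagonal] at h2
        have h3 : (s i)⁻¹ ≠ 0 := inv_ne_zero (hs i).ne'
        simpa [h3] using h2
      have hker : v ∈ LinearMap.ker A.mulVecLin := by
        rw [LinearMap.mem_ker, Matrix.mulVecLin_apply]
        exact hAv
      have hrn := LinearMap.finrank_range_add_finrank_ker A.mulVecLin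
      rw [Module.finrank_fin_fun] at hrn
      have hr : Module.finrank ℝ (LinearMap.range A.mulVecLin) = n := hrank
      have hk0 : Module.finrank ℝ (LinearMap.ker A.mulVecLin) = 0 := by omega
      have hbot : LinearMap.ker A.mulVecLin = ⊥ := Submodule.finrank_eq_zero.mp hk0
      rw [hbot, Submodule.mem_bot] at hker
      exact hker
    rw [hHeq wNew, hHeq wOld, hgeq wNew, hgeq wOld]
    have hpdO : (Bᵀ * Matrix.diagonal wOld * B).PosDef := hW_posdef B hBinj wOld hwOld
    have hpdN : (Bᵀ * Matrix.diagonal wNew * B).PosDef := hW_posdef B hBinj wNew hwNew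
    set Hold := Bᵀ * Matrix.diagonal wOld * B with hHold
    set Hnew := Bᵀ * Matrix.diagonal wNew * B with hHnew
    set g := t • c - Bᵀ *ᵥ wOld with hgdef
    set d := Bᵀ *ᵥ (fun i => wNew i - wOld i) with hddef
    have hsplit : t • c - Bᵀ *ᵥ wNew = g + (-d) := by
      have hadd : Bᵀ *ᵥ wNew = Bᵀ *ᵥ wOld + d := by
        rw [hddef, ← Matrix.mulVec_add]
        have hvv : wOld + (fun i => wNew i - wOld i) = wNew := by
          funext i
          simp
        rw [hvv]
      rw [hadd, hgdef]
      abel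
    rw [hsplit]
    -- triangle inequality
    have step1 := psd_sqrt_add hpdN.inv.posSemidef g (-d)
    have hdd : (-d) ⬝ᵥ Hnew⁻¹ *ᵥ (-d) = d ⬝ᵥ Hnew⁻¹ *ᵥ d := by
      rw [Matrix.mulVec_neg, neg_dotProduct, dotProduct_neg, neg_neg]
    rw [hdd] at step1
    -- comparison bound for the first term
    have hle : ∀ y, Real.exp (-ε) * (y ⬝ᵥ Hold *ᵥ y) ≤ y ⬝ᵥ Hnew *ᵥ y := by
      intro y
      rw [hHold, hHnew, quadform_eq, quadform_eq, Finset.mul_sum]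
      apply Finset.sum_le_sum
      intro i _
      have h1 : Real.exp (-ε) ≤ Real.exp (Real.log (wNew i) - Real.log (wOld i)) :=
        Real.exp_le_exp.mpr (neg_le_of_abs_le (hlog i))
      have h2 : Real.exp (-ε) * wOld i ≤ wNew i := by
        rw [hwNe i]
        calc Real.exp (-ε) * wOld i
            ≤ Real.exp (Real.log (wNew i) - Real.log (wOld i)) * wOld i :=
              mul_le_mul_of_nonneg_right h1 (hwOld i).le
          _ = wOld i * Real.exp (Real.log (wNew i) - Real.log (wOld i)) := by ring
      calc Real.exp (-ε) * (wOld i * (B *ᵥ y) i ^ 2)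
          = (Real.exp (-ε) * wOld i) * (B *ᵥ y) i ^ 2 := by ring
        _ ≤ wNew i * (B *ᵥ y) i ^ 2 := mul_le_mul_of_nonneg_right h2 (sq_nonneg _)
    have comp := q_comp hpdO hpdN (Real.exp_pos (-ε)) hle g
    rw [Real.exp_neg, inv_inv] at comp
    have sqexp : Real.sqrt (Real.exp ε) ≤ 1 + ε := by
      calc Real.sqrt (Real.exp ε) ≤ Real.sqrt ((1 + ε) ^ 2) :=
            Real.sqrt_le_sqrt (exp_le_one_add_sq hε0 hε)
        _ = 1 + ε := Real.sqrt_sq h1ε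
    have step2 : Real.sqrt (g ⬝ᵥ Hnew⁻¹ *ᵥ g) ≤ (1 + ε) * Real.sqrt (g ⬝ᵥ Hold⁻¹ *ᵥ g) := by
      calc Real.sqrt (g ⬝ᵥ Hnew⁻¹ *ᵥ g)
          ≤ Real.sqrt (Real.exp ε * (g ⬝ᵥ Hold⁻¹ *ᵥ g)) := Real.sqrt_le_sqrt comp
        _ = Real.sqrt (Real.exp ε) * Real.sqrt (g ⬝ᵥ Hold⁻¹ *ᵥ g) :=
            Real.sqrt_mul (Real.exp_pos ε).le _
        _ ≤ (1 + ε) * Real.sqrt (g ⬝ᵥ Hold⁻¹ *ᵥ g) :=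
            mul_le_mul_of_nonneg_right sqexp (Real.sqrt_nonneg _)
    -- projection bound for the second term
    have hproj := q_proj B hBinj wNew hwNew (fun i => wNew i - wOld i)
    rw [← hHnew] at hproj
    have hterm : ∀ i : Fin m, (wNew i - wOld i) ^ 2 / wNew i
        ≤ (1 + ε) ^ 2 * (wOld i * (Real.log (wNew i) - Real.log (wOld i)) ^ 2) := by
      intro i
      have hsb := scalar_bound (hlog i) hε
      set z := Real.log (wNew i) - Real.log (wOld i) with hz
      have hwz : wNew i = wOld i * Real.exp z := by rw [hz]; exact hwNe i
      rw [hwz, div_le_iff₀ (mul_pos (hwOld i) (Real.exp_pos z))]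
      have hgoal : (wOld i * Real.exp z - wOld i) ^ 2
          = wOld i ^ 2 * (Real.exp z - 1) ^ 2 := by ring
      rw [hgoal]
      calc wOld i ^ 2 * (Real.exp z - 1) ^ 2
          ≤ wOld i ^ 2 * ((1 + ε) ^ 2 * z ^ 2 * Real.exp z) :=
            mul_le_mul_of_nonneg_left hsb (sq_nonneg _)
        _ = (1 + ε) ^ 2 * (wOld i * z ^ 2) * (wOld i * Real.exp z) := by ring
    have hsum2 : d ⬝ᵥ Hnew⁻¹ *ᵥ d
        ≤ (1 + ε) ^ 2 * ∑ i, wOld i * (Real.log (wNew i) - Real.log (wOld i)) ^ 2 := by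
      calc d ⬝ᵥ Hnew⁻¹ *ᵥ d ≤ ∑ i, (wNew i - wOld i) ^ 2 / wNew i := hproj
        _ ≤ ∑ i, (1 + ε) ^ 2 * (wOld i * (Real.log (wNew i) - Real.log (wOld i)) ^ 2) :=
            Finset.sum_le_sum fun i _ => hterm i
        _ = _ := by rw [← Finset.mul_sum]
    have step3 : Real.sqrt (d ⬝ᵥ Hnew⁻¹ *ᵥ d)
        ≤ (1 + ε) * Real.sqrt (∑ i, wOld i * (Real.log (wNew i) - Real.log (wOld i)) ^ 2) := by
      calc Real.sqrt (d ⬝ᵥ Hnew⁻¹ *ᵥ d)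
          ≤ Real.sqrt ((1 + ε) ^ 2 * ∑ i, wOld i *
              (Real.log (wNew i) - Real.log (wOld i)) ^ 2) := Real.sqrt_le_sqrt hsum2
        _ = Real.sqrt ((1 + ε) ^ 2) * _ := Real.sqrt_mul (sq_nonneg _) _
        _ = (1 + ε) * _ := by rw [Real.sqrt_sq h1ε]
    rw [mul_add]
    linarith [step1, step2, step3]
end

section
/- For every real x with |x| ≤ 1/2, (e^x − 1)²/e^x ≤ (1 + |x|)² x². -/
theorem exp_sub_one_sq_div_exp_bound (x : ℝ) (hx : |x| ≤ 1 / 2) :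
    (Real.exp x - 1) ^ 2 / Real.exp x ≤ (1 + |x|) ^ 2 * x ^ 2 := by
  have hex := Real.exp_pos x
  have hea := Real.exp_pos |x|
  have habs := abs_nonneg x
  -- exp |x| ≤ (1 + |x|)^2
  have h1 : (1 - |x|) * Real.exp |x| ≤ 1 := by
    have h := Real.add_one_le_exp (-|x|)
    rw [Real.exp_neg] at h
    have : (1 - |x|) ≤ (Real.exp |x|)⁻¹ := by linarith
    calc (1 - |x|) * Real.exp |x| ≤ (Real.exp |x|)⁻¹ * Real.exp |x| := by
          exact mul_le_mul_of_nonneg_right this hea.le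
      _ = 1 := inv_mul_cancel₀ hea.ne'
  have hE : Real.exp |x| ≤ (1 + |x|) ^ 2 := by
    nlinarith [sq_nonneg (|x|), mul_pos hea hea]
  -- key: (exp x - 1)^2 ≤ x^2 * exp x * exp |x|
  have hK : (Real.exp x - 1) ^ 2 ≤ x ^ 2 * Real.exp x * Real.exp |x| := by
    rcases le_or_gt 0 x with h | h
    · rw [abs_of_nonneg h]
      have h2 : (1 - x) * Real.exp x ≤ 1 := by
        have hh := Real.add_one_le_exp (-x)
        rw [Real.exp_neg] at hh
        have : (1 - x) ≤ (Real.exp x)⁻¹ := by linarith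
        calc (1 - x) * Real.exp x ≤ (Real.exp x)⁻¹ * Real.exp x := by
              exact mul_le_mul_of_nonneg_right this hex.le
          _ = 1 := inv_mul_cancel₀ hex.ne'
      have h3 : 1 + x ≤ Real.exp x := by
        have := Real.add_one_le_exp x; linarith
      nlinarith [sq_nonneg (Real.exp x - 1 - x * Real.exp x)]
    · rw [abs_of_neg h]
      have hprod : Real.exp x * Real.exp (-x) = 1 := by
        rw [← Real.exp_add]; simp
      have h3 : 1 + x ≤ Real.exp x := by
        have := Real.add_one_le_exp x; linarith
      have h4 : Real.exp x ≤ 1 := Real.exp_le_one_iff.mpr h.le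
      have : x ^ 2 * Real.exp x * Real.exp (-x) = x ^ 2 := by
        rw [mul_assoc, hprod, mul_one]
      rw [this]
      nlinarith
  rw [div_le_iff₀ hex]
  calc (Real.exp x - 1) ^ 2 ≤ x ^ 2 * Real.exp x * Real.exp |x| := hK
    _ ≤ x ^ 2 * Real.exp x * (1 + |x|) ^ 2 := by
        apply mul_le_mul_of_nonneg_left hE
        positivity
    _ = (1 + |x|) ^ 2 * x ^ 2 * Real.exp x := by ring
end

section
/- Let A ∈ ℝ^{m×n} with full column rank and w ∈ ℝ^m positive. Define the leverage scores σ_A(w)_i = (W^{1/2} A (Aᵀ W A)^{-1} Aᵀ W^{1/2})_{ii}. Then the Jacobian of the map w ↦ σ_A(w) is J(w) = Λ_A(w) W^{-1}, where Λ_A(w) = Σ_A(w) − P_A(w)^(2), Σ_A(w) = Diag(σ_A(w)), P_A(w) = W^{1/2} A (Aᵀ W A)^{-1} Aᵀ W^{1/2}, and P^(2) denotes the entrywise square. -/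
open Matrix

attribute [local instance] Matrix.linftyOpNormedAddCommGroup Matrix.linftyOpNormedRing
  Matrix.linftyOpNormedAlgebra

section aux
variable {m n : ℕ} (A : Matrix (Fin m) (Fin n) ℝ)

def MlinAux : (Fin m → ℝ) →ₗ[ℝ] Matrix (Fin n) (Fin n) ℝ where
  toFun v := Aᵀ * Matrix.diagonal v * A
  map_add' x y := by
    show Aᵀ * Matrix.diagonal (x + y) * A = _
    rw [show Matrix.diagonal (x + y) = Matrix.diagonal x + Matrix.diagonal y from
      (Matrix.diagonal_add x y).symm, Matrix.mul_add, Matrix.add_mul]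
  map_smul' c x := by
    show Aᵀ * Matrix.diagonal (c • x) * A = c • (Aᵀ * Matrix.diagonal x * A)
    rw [show Matrix.diagonal (c • x) = c • Matrix.diagonal x from Matrix.diagonal_smul c x,
      Matrix.mul_smul, Matrix.smul_mul]

def entryAux (i : Fin m) : Matrix (Fin n) (Fin n) ℝ →ₗ[ℝ] ℝ where
  toFun X := (A * X * Aᵀ) i i
  map_add' X Y := by simp [Matrix.mul_add, Matrix.add_mul, Matrix.add_apply]
  map_smul' c X := by simp [Matrix.mul_smul, Matrix.smul_mul, Matrix.smul_apply]

end aux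

theorem leverage_score_jacobian {m n : ℕ} (A : Matrix (Fin m) (Fin n) ℝ)
    (hrank : A.rank = n) (w : Fin m → ℝ) (hw : ∀ i, 0 < w i)
    (lev : (Fin m → ℝ) → (Fin m → ℝ))
    (hlev : lev = fun v i => v i * ((A * (Aᵀ * Matrix.diagonal v * A)⁻¹ * Aᵀ) i i))
    (P : Matrix (Fin m) (Fin m) ℝ)
    (hP : P = Matrix.diagonal (fun i => Real.sqrt (w i)) * A *
        (Aᵀ * Matrix.diagonal w * A)⁻¹ * Aᵀ * Matrix.diagonal (fun i => Real.sqrt (w i)))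
    (Λ : Matrix (Fin m) (Fin m) ℝ)
    (hΛ : Λ = Matrix.diagonal (lev w) - P.map (fun x => x ^ 2)) :
    HasFDerivAt lev
      (LinearMap.toContinuousLinearMap ((Λ * (Matrix.diagonal w)⁻¹).mulVecLin)) w := by
  classical
  set N : Matrix (Fin n) (Fin n) ℝ := Aᵀ * Matrix.diagonal w * A with hN
  -- invertibility of N
  have hinjA : Function.Injective A.mulVecLin := by
    rw [← LinearMap.ker_eq_bot]
    have h1 := A.mulVecLin.finrank_range_add_finrank_ker
    rw [show Module.finrank ℝ (LinearMap.range A.mulVecLin) = n from hrank] at h1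
    simp only [Module.finrank_pi, Fintype.card_fin] at h1
    exact Submodule.finrank_eq_zero.mp (by omega)
  have hunit : IsUnit N := by
    rw [← Matrix.mulVec_injective_iff_isUnit, ← Matrix.coe_mulVecLin, ← LinearMap.ker_eq_bot,
      LinearMap.ker_eq_bot']
    intro x hx
    have h0 : x ⬝ᵥ (N *ᵥ x) = 0 := by
      rw [show N.mulVecLin x = N *ᵥ x from rfl] at hx
      rw [hx, dotProduct_zero]
    have hsum : ∑ i, w i * (A *ᵥ x) i ^ 2 = 0 := by
      rw [← h0, hN, show (Aᵀ * Matrix.diagonal w * A) *ᵥ x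
            = Aᵀ *ᵥ (Matrix.diagonal w *ᵥ (A *ᵥ x)) by
          rw [Matrix.mulVec_mulVec, Matrix.mulVec_mulVec],
        Matrix.dotProduct_mulVec, Matrix.vecMul_transpose]
      simp only [dotProduct, Matrix.mulVec_diagonal]
      exact Finset.sum_congr rfl fun i _ => by ring
    have hAx : A *ᵥ x = 0 := by
      funext i
      have hnn : ∀ i ∈ Finset.univ, 0 ≤ w i * (A *ᵥ x) i ^ 2 := fun i _ =>
        mul_nonneg (hw i).le (sq_nonneg _)
      have := (Finset.sum_eq_zero_iff_of_nonneg hnn).mp hsum i (Finset.mem_univ i)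
      have h2 : (A *ᵥ x) i ^ 2 = 0 := by
        rcases mul_eq_zero.mp this with h | h
        · exact absurd h (hw i).ne'
        · exact h
      simpa using pow_eq_zero_iff (n := 2) (by norm_num) |>.mp h2
    have : A.mulVecLin x = A.mulVecLin 0 := by simpa using hAx
    simpa using hinjA this
  set C : Matrix (Fin n) (Fin n) ℝ := N⁻¹ with hC
  set B : Matrix (Fin m) (Fin m) ℝ := A * C * Aᵀ with hB
  -- derivative of v ↦ (Aᵀ D_v A)⁻¹
  have hcoeinv : ((hunit.unit⁻¹ : (Matrix (Fin n) (Fin n) ℝ)ˣ) : Matrix (Fin n) (Fin n) ℝ) = C := by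
    rw [hC, Matrix.coe_units_inv, hunit.unit_spec]
  have hinvR : HasFDerivAt (Ring.inverse : Matrix (Fin n) (Fin n) ℝ → _)
      (-(ContinuousLinearMap.mulLeftRight ℝ _ C C)) N := by
    have := hasFDerivAt_ringInverse (𝕜 := ℝ) hunit.unit
    rw [hunit.unit_spec, hcoeinv] at this
    exact this
  have hMlin : HasFDerivAt (fun v => MlinAux A v)
      (LinearMap.toContinuousLinearMap (MlinAux A)) w :=
    (LinearMap.toContinuousLinearMap (MlinAux A)).hasFDerivAt
  have hMw : MlinAux A w = N := rfl
  set Dinv : (Fin m → ℝ) →L[ℝ] Matrix (Fin n) (Fin n) ℝ :=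
    (-(ContinuousLinearMap.mulLeftRight ℝ _ C C)).comp
      (LinearMap.toContinuousLinearMap (MlinAux A)) with hDinv
  have hinv : HasFDerivAt (fun v => (Aᵀ * Matrix.diagonal v * A)⁻¹) Dinv w := by
    have hcomp : HasFDerivAt (fun v => Ring.inverse (MlinAux A v)) Dinv w := by
      show HasFDerivAt ((Ring.inverse : Matrix (Fin n) (Fin n) ℝ → _) ∘ fun v => MlinAux A v)
        Dinv w
      exact HasFDerivAt.comp w hinvR hMlin
    have hfn : (fun v => (Aᵀ * Matrix.diagonal v * A)⁻¹)
        = fun v => Ring.inverse (MlinAux A v) := by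
      funext v
      rw [show MlinAux A v = Aᵀ * Matrix.diagonal v * A from rfl,
        Matrix.nonsing_inv_eq_ringInverse]
    rw [hfn]; exact hcomp
  -- componentwise
  rw [hlev]
  apply hasFDerivAt_pi'.2
  intro i
  have hgi : HasFDerivAt (fun v => ((A * (Aᵀ * Matrix.diagonal v * A)⁻¹ * Aᵀ) i i))
      ((LinearMap.toContinuousLinearMap (entryAux A i)).comp Dinv) w :=
    (LinearMap.toContinuousLinearMap (entryAux A i)).hasFDerivAt.comp w hinv
  have hvi := hasFDerivAt_apply (𝕜 := ℝ) i (w : ∀ _ : Fin m, ℝ)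
  have hmul := hvi.mul hgi
  refine hmul.congr_fderiv ?_
  have hBsymm : ∀ a b, B b a = B a b := by
    intro a b
    have hNt : Nᵀ = N := by
      rw [hN, Matrix.transpose_mul, Matrix.transpose_mul, Matrix.transpose_transpose,
        Matrix.diagonal_transpose, Matrix.mul_assoc]
    have hCt : Cᵀ = C := by rw [hC, Matrix.transpose_nonsing_inv, hNt]
    have hBt : Bᵀ = B := by
      rw [hB, Matrix.transpose_mul, Matrix.transpose_mul, Matrix.transpose_transpose, hCt,
        Matrix.mul_assoc]
    conv_lhs => rw [← hBt]
    rfl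
  have hPij : ∀ a b, P a b = Real.sqrt (w a) * B a b * Real.sqrt (w b) := by
    intro a b
    rw [hP, show Matrix.diagonal (fun i => Real.sqrt (w i)) * A * (Aᵀ * Matrix.diagonal w * A)⁻¹
          * Aᵀ * Matrix.diagonal (fun i => Real.sqrt (w i))
        = Matrix.diagonal (fun i => Real.sqrt (w i)) * B
          * Matrix.diagonal (fun i => Real.sqrt (w i)) by
      rw [hB, hC, hN]; simp only [Matrix.mul_assoc]]
    rw [Matrix.mul_diagonal, Matrix.diagonal_mul]
  have hdiaginv : (Matrix.diagonal w)⁻¹ = Matrix.diagonal (fun j => (w j)⁻¹) := by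
    apply Matrix.inv_eq_right_inv
    ext a b
    by_cases hab : a = b
    · subst hab
      simp [Matrix.mul_diagonal, Matrix.diagonal_apply, mul_inv_cancel₀ (hw a).ne',
        Matrix.one_apply]
    · simp [Matrix.mul_diagonal, Matrix.diagonal_apply, hab, Matrix.one_apply]
  ext h
  simp only [ContinuousLinearMap.add_apply, ContinuousLinearMap.coe_smul', Pi.smul_apply,
    ContinuousLinearMap.comp_apply, ContinuousLinearMap.proj_apply,
    LinearMap.coe_toContinuousLinearMap', Matrix.mulVecLin_apply, hDinv,
    ContinuousLinearMap.neg_apply, ContinuousLinearMap.mulLeftRight_apply, smul_eq_mul]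
  change w i * (entryAux A i) (-(C * (MlinAux A h) * C)) +
    (A * (Aᵀ * Matrix.diagonal w * A)⁻¹ * Aᵀ) i i * h i = _
  rw [show (MlinAux A) h = Aᵀ * Matrix.diagonal h * A from rfl]
  rw [show (entryAux A i) (-(C * (Aᵀ * Matrix.diagonal h * A) * C))
      = -((A * (C * (Aᵀ * Matrix.diagonal h * A) * C) * Aᵀ) i i) by
    simp [entryAux, Matrix.neg_apply, Matrix.mul_neg, Matrix.neg_mul]]
  rw [show A * (C * (Aᵀ * Matrix.diagonal h * A) * C) * Aᵀ = B * Matrix.diagonal h * B by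
    rw [hB]; simp only [Matrix.mul_assoc]]
  rw [show (B * Matrix.diagonal h * B) i i = ∑ j, B i j * h j * B j i by
    rw [Matrix.mul_apply]
    exact Finset.sum_congr rfl fun j _ => by rw [Matrix.mul_diagonal]]
  rw [show A * (Aᵀ * Matrix.diagonal w * A)⁻¹ * Aᵀ = B from rfl]
  rw [show (∑ j, B i j * h j * B j i) = ∑ j, B i j ^ 2 * h j from
    Finset.sum_congr rfl fun j _ => by rw [hBsymm j i]; ring]
  rw [show ((Λ * (Matrix.diagonal w)⁻¹) *ᵥ h) i = ∑ j, (Λ * (Matrix.diagonal w)⁻¹) i j * h j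
    from rfl]
  rw [show (∑ j, (Λ * (Matrix.diagonal w)⁻¹) i j * h j)
      = ∑ j, ((if i = j then w i * B i i else 0) - w i * B i j ^ 2 * w j) * (w j)⁻¹ * h j by
    have hlevwi : lev w i = w i * B i i := by rw [hlev]
    refine Finset.sum_congr rfl fun j _ => ?_
    rw [hdiaginv, Matrix.mul_diagonal, hΛ, Matrix.sub_apply, Matrix.diagonal_apply,
      Matrix.map_apply, hPij, hlevwi, mul_pow, mul_pow, Real.sq_sqrt (hw i).le,
      Real.sq_sqrt (hw j).le]]
  rw [show (∑ j, ((if i = j then w i * B i i else 0) - w i * B i j ^ 2 * w j) * (w j)⁻¹ * h j)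
      = ∑ j, ((if i = j then w i * B i i * (w j)⁻¹ * h j else 0) - w i * (B i j ^ 2 * h j)) from
    Finset.sum_congr rfl fun j _ => by
      have : w j * (w j)⁻¹ = 1 := mul_inv_cancel₀ (hw j).ne'
      split <;> [skip; skip] <;>
        · field_simp [(hw j).ne'] <;>
          ring]
  rw [Finset.sum_sub_distrib, Finset.sum_ite_eq Finset.univ i
    (fun j => w i * B i i * (w j)⁻¹ * h j)]
  simp only [Finset.mem_univ, if_true]
  rw [← Finset.mul_sum]
  field_simp [(hw i).ne']
  ring
end

section
/- Let A ∈ ℝ^{m×n} with full column rank and w ∈ ℝ^m positive. Define R(w)_{ij} = a_iᵀ (Aᵀ W A)^{-1} a_j. Then ∂R(w)_{ij}/∂w_k = − R(w)_{ik} R(w)_{kj} for all i, j, k. -/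
open Matrix

section Helpers

variable {m n : ℕ}

private theorem erpd_quad_form_eq (A : Matrix (Fin m) (Fin n) ℝ) (D : Matrix (Fin m) (Fin m) ℝ)
    (x : Fin n → ℝ) (y : Fin n → ℝ) :
    x ⬝ᵥ (Aᵀ * D * A) *ᵥ y = (A *ᵥ x) ⬝ᵥ D *ᵥ (A *ᵥ y) := by
  rw [Matrix.mul_assoc, ← Matrix.mulVec_mulVec, Matrix.dotProduct_mulVec,
    Matrix.vecMul_transpose, ← Matrix.mulVec_mulVec]

private theorem erpd_inj_of_rank (A : Matrix (Fin m) (Fin n) ℝ) (hrank : A.rank = n) :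
    Function.Injective A.mulVec := by
  have h := A.mulVecLin.finrank_range_add_finrank_ker
  rw [show Module.finrank ℝ (LinearMap.range A.mulVecLin) = n from hrank] at h
  simp only [Module.finrank_fintype_fun_eq_card, Fintype.card_fin] at h
  have hker : LinearMap.ker A.mulVecLin = ⊥ := by
    rw [← Submodule.finrank_eq_zero]; omega
  have := LinearMap.ker_eq_bot.mp hker
  simpa [Matrix.mulVecLin_apply, Function.Injective] using this

private theorem erpd_posdef_AWA (A : Matrix (Fin m) (Fin n) ℝ)
    (hinj : Function.Injective A.mulVec) (w : Fin m → ℝ) (hw : ∀ i, 0 < w i) :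
    (Aᵀ * Matrix.diagonal w * A).PosDef := by
  have hd : (Matrix.diagonal w).PosDef := Matrix.posDef_diagonal_iff.mpr hw
  refine Matrix.posDef_iff_dotProduct_mulVec.mpr ⟨?_, ?_⟩
  · have := Matrix.isHermitian_conjTranspose_mul_mul A hd.1
    simpa [Matrix.conjTranspose_eq_transpose_of_trivial] using this
  · intro x hx
    have hAx : A *ᵥ x ≠ 0 := fun h => hx (hinj (by simpa using h))
    have h2 := hd.dotProduct_mulVec_pos hAx
    simpa [erpd_quad_form_eq] using h2

private theorem erpd_diag_update (k : Fin m) (w : Fin m → ℝ) (t : ℝ) :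
    Matrix.diagonal (Function.update w k t)
      = Matrix.diagonal w + (t - w k) • Matrix.single k k (1:ℝ) := by
  ext a b
  rcases eq_or_ne a b with rfl | hab
  · rcases eq_or_ne a k with rfl | hak
    · simp [Matrix.single]
    · simp [Matrix.single, Function.update, hak, (Ne.symm hak)]
  · rw [Matrix.diagonal_apply_ne _ hab]
    have : ¬(k = a ∧ k = b) := by rintro ⟨rfl, rfl⟩; exact hab rfl
    simp [Matrix.single, Matrix.diagonal_apply_ne _ hab, this]

private theorem erpd_AEA (A : Matrix (Fin m) (Fin n) ℝ) (k : Fin m) :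
    Aᵀ * Matrix.single k k (1:ℝ) * A
      = Matrix.vecMulVec (fun l => A k l) (fun l => A k l) := by
  ext p q
  simp [Matrix.mul_apply, Matrix.single, Matrix.vecMulVec_apply, ite_and,
    Finset.sum_ite_eq, Finset.sum_ite_eq', Finset.mul_sum, Finset.sum_mul]

private theorem erpd_vecMulVec_mulVec (u v x : Fin n → ℝ) :
    Matrix.vecMulVec u v *ᵥ x = (v ⬝ᵥ x) • u := by
  ext p
  simp [Matrix.vecMulVec_apply, Matrix.mulVec, dotProduct, Finset.mul_sum,
    mul_comm, mul_assoc, mul_left_comm]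

end Helpers

noncomputable local instance matNormedRing {n : ℕ} : NormedRing (Matrix (Fin n) (Fin n) ℝ) :=
  Matrix.linftyOpNormedRing

noncomputable local instance matNormedAlgebra {n : ℕ} :
    NormedAlgebra ℝ (Matrix (Fin n) (Fin n) ℝ) :=
  Matrix.linftyOpNormedAlgebra

theorem effective_resistance_partial_deriv {m n : ℕ} (A : Matrix (Fin m) (Fin n) ℝ)
    (hrank : A.rank = n) (w : Fin m → ℝ) (hw : ∀ i, 0 < w i)
    (R : (Fin m → ℝ) → Fin m → Fin m → ℝ)
    (hR : R = fun v i j => (fun l => A i l) ⬝ᵥ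
        ((Aᵀ * Matrix.diagonal v * A)⁻¹ *ᵥ fun l => A j l))
    (i j k : Fin m) :
    HasDerivAt (fun t => R (Function.update w k t) i j)
      (-(R w i k * R w k j)) (w k) := by
  subst hR
  set ai : Fin n → ℝ := fun l => A i l with hai
  set aj : Fin n → ℝ := fun l => A j l with haj
  set ak : Fin n → ℝ := fun l => A k l with hak
  set M₀ : Matrix (Fin n) (Fin n) ℝ := Aᵀ * Matrix.diagonal w * A with hM₀
  set C : Matrix (Fin n) (Fin n) ℝ := Matrix.vecMulVec ak ak with hC
  have hU : IsUnit M₀ :=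
    (erpd_posdef_AWA A (erpd_inj_of_rank A hrank) w hw).isUnit
  -- affine decomposition
  have haff : ∀ t : ℝ, Aᵀ * Matrix.diagonal (Function.update w k t) * A
      = M₀ + (t - w k) • C := by
    intro t
    rw [erpd_diag_update, Matrix.mul_add, Matrix.add_mul, Matrix.mul_smul, Matrix.smul_mul,
      erpd_AEA]
  -- derivative of the matrix path
  have hMpath : HasDerivAt (fun t : ℝ => M₀ + (t - w k) • C) C (w k) := by
    have h1 : HasDerivAt (fun t : ℝ => t - w k) 1 (w k) := (hasDerivAt_id _).sub_const _
    have h2 := h1.smul_const C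
    have h3 := h2.const_add M₀
    simp only [one_smul] at h3
    exact h3
  -- derivative of inverse
  set u : (Matrix (Fin n) (Fin n) ℝ)ˣ := hU.unit with hu
  have hcoe : (↑u : Matrix (Fin n) (Fin n) ℝ) = M₀ := hU.unit_spec
  have hpt : M₀ + ((w k) - w k) • C = ↑u := by rw [hcoe]; simp
  have hfd' : HasFDerivAt Ring.inverse
      (-((ContinuousLinearMap.mulLeftRight ℝ (Matrix (Fin n) (Fin n) ℝ)) ↑u⁻¹) ↑u⁻¹)
      (M₀ + ((w k) - w k) • C) := hpt ▸ hasFDerivAt_ringInverse (𝕜 := ℝ) u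
  have huinv : (↑u⁻¹ : Matrix (Fin n) (Fin n) ℝ) = M₀⁻¹ := by
    rw [Matrix.coe_units_inv, hcoe]
  have hinv : HasDerivAt (fun t : ℝ => Ring.inverse (M₀ + (t - w k) • C))
      (-(M₀⁻¹ * C * M₀⁻¹)) (w k) := by
    have hcomp := hfd'.comp_hasDerivAt (w k) hMpath
    simp [Function.comp_def, huinv, ContinuousLinearMap.mulLeftRight_apply] at hcomp
    exact hcomp
  -- the entry functional
  let φ : Matrix (Fin n) (Fin n) ℝ →ₗ[ℝ] ℝ :=
    { toFun := fun X => ai ⬝ᵥ (X *ᵥ aj)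
      map_add' := by intro X Y; simp [Matrix.add_mulVec, dotProduct_add]
      map_smul' := by intro c X; simp [Matrix.smul_mulVec, dotProduct_smul] }
  let L : Matrix (Fin n) (Fin n) ℝ →L[ℝ] ℝ := LinearMap.toContinuousLinearMap φ
  have hL : HasDerivAt (fun t : ℝ => L (Ring.inverse (M₀ + (t - w k) • C)))
      (L (-(M₀⁻¹ * C * M₀⁻¹))) (w k) := L.hasFDerivAt.comp_hasDerivAt (w k) hinv
  -- identify the function
  have hfun : (fun t : ℝ => ai ⬝ᵥ ((Aᵀ * Matrix.diagonal (Function.update w k t) * A)⁻¹ *ᵥ aj))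
      = fun t : ℝ => L (Ring.inverse (M₀ + (t - w k) • C)) := by
    funext t
    rw [haff t, Matrix.nonsing_inv_eq_ringInverse]
    rfl
  -- identify the value
  have hval : L (-(M₀⁻¹ * C * M₀⁻¹))
      = -((ai ⬝ᵥ M₀⁻¹ *ᵥ ak) * (ak ⬝ᵥ M₀⁻¹ *ᵥ aj)) := by
    have : L (M₀⁻¹ * C * M₀⁻¹) = (ai ⬝ᵥ M₀⁻¹ *ᵥ ak) * (ak ⬝ᵥ M₀⁻¹ *ᵥ aj) := by
      show ai ⬝ᵥ ((M₀⁻¹ * C * M₀⁻¹) *ᵥ aj) = _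
      rw [← Matrix.mulVec_mulVec, ← Matrix.mulVec_mulVec, hC, erpd_vecMulVec_mulVec,
        Matrix.mulVec_smul, dotProduct_smul, smul_eq_mul]
      ring
    rw [map_neg, this]
  rw [hval] at hL
  exact hfun ▸ hL
end

section
/- Let Σ, Λ, G be m×m real symmetric matrices with G diagonal and 0 ⪯ Λ ⪯ Σ ≺ G, and let α ∈ (0,1), r ≥ 2/(1−α). Set B := (G − αΛ)^{-1}(G − (α + 2/r)Λ). Then for every y ∈ ℝ^m, ‖By‖_G ≤ ‖y‖_G, where ‖v‖_G := sqrt(vᵀ G v). -/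
open Matrix

/-- Cauchy–Schwarz for a PSD real matrix. -/
lemma psd_cauchy_schwarz_s19 {m : ℕ} {Λ : Matrix (Fin m) (Fin m) ℝ} (h : Λ.PosSemidef)
    (w y : Fin m → ℝ) :
    (w ⬝ᵥ Λ *ᵥ y) ^ 2 ≤ (w ⬝ᵥ Λ *ᵥ w) * (y ⬝ᵥ Λ *ᵥ y) := by
  set s := y ⬝ᵥ Λ *ᵥ y
  set q := w ⬝ᵥ Λ *ᵥ w
  set t := w ⬝ᵥ Λ *ᵥ y with ht
  have hT : Λᵀ = Λ := h.1.eq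
  have hsym : y ⬝ᵥ Λ *ᵥ w = t := by
    rw [ht, dotProduct_mulVec w, ← mulVec_transpose, hT, dotProduct_comm]
  have key : ∀ a b : ℝ, 0 ≤ a ^ 2 * q + 2 * (a * b) * t + b ^ 2 * s := by
    intro a b
    have h0 := h.dotProduct_mulVec_nonneg (a • w + b • y)
    simp only [star_trivial, mulVec_add, mulVec_smul, dotProduct_add, add_dotProduct,
      smul_dotProduct, dotProduct_smul, smul_eq_mul] at h0
    rw [hsym] at h0
    nlinarith [h0]
  have hd := discrim_le_zero (a := q) (b := 2 * t) (c := s) (fun e => by nlinarith [key e 1])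
  rw [discrim] at hd
  nlinarith [hd]

lemma scalar_step_bound (α c s q t : ℝ) (hα0 : 0 < α) (hα1 : α < 1) (hc0 : 0 < c)
    (hcα : c ≤ 1 - α) (hs : 0 ≤ s) (hq : 0 ≤ q) (hts : t ^ 2 ≤ q * s)
    (hkey : (1 - α) * q ≤ c * (-t)) :
    2 * (-c * s + α * t) + (-c * t + α * q) ≤ 0 := by
  have h2u : 0 ≤ -2 * t - q := by nlinarith
  have hcu : 0 ≤ c * -t + α * q := by nlinarith
  rcases eq_or_lt_of_le hq with hq0 | hq0
  · have ht2 : t ^ 2 = 0 := le_antisymm (by nlinarith) (sq_nonneg t)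
    have ht0 : t = 0 := sq_eq_zero_iff.mp ht2
    nlinarith [mul_nonneg hc0.le hs]
  · have hqexpr : 0 ≤ q * (2 * c * s - 2 * α * t + c * t - α * q) := by
      nlinarith [mul_nonneg h2u hcu, mul_nonneg hc0.le (sub_nonneg.mpr hts)]
    nlinarith [hqexpr, hq0]

theorem step_consistency_matrix_bound {m : ℕ}
    (S Λ G : Matrix (Fin m) (Fin m) ℝ)
    (hS : S.IsSymm) (hΛ : Λ.PosSemidef) (hΛS : (S - Λ).PosSemidef)
    (d : Fin m → ℝ) (hd : ∀ i, 0 < d i) (hG : G = Matrix.diagonal d)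
    (hSG : (G - S).PosDef)
    (α r : ℝ) (hα : α ∈ Set.Ioo (0 : ℝ) 1) (hr : 2 / (1 - α) ≤ r)
    (B : Matrix (Fin m) (Fin m) ℝ)
    (hB : B = (G - α • Λ)⁻¹ * (G - (α + 2 / r) • Λ)) (y : Fin m → ℝ) :
    Real.sqrt ((B *ᵥ y) ⬝ᵥ (G *ᵥ (B *ᵥ y))) ≤ Real.sqrt (y ⬝ᵥ (G *ᵥ y)) := by
  obtain ⟨hα0, hα1⟩ := hα
  have hα1' : (0:ℝ) < 1 - α := by linarith
  have hr0 : 0 < r := lt_of_lt_of_le (by positivity) hr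
  set c : ℝ := 2 / r with hc
  have hc0 : 0 < c := by positivity
  have hcα : c ≤ 1 - α := by
    rw [hc, div_le_iff₀ hr0]
    have h2 : 2 ≤ r * (1 - α) := by
      have := (div_le_iff₀ hα1').mp hr
      linarith
    nlinarith
  -- the matrices
  set M : Matrix (Fin m) (Fin m) ℝ := G - α • Λ with hM
  set N : Matrix (Fin m) (Fin m) ℝ := G - (α + c) • Λ with hN
  -- positivity facts
  have hsmul : ∀ (β : ℝ), 0 ≤ β → (β • Λ).PosSemidef := by
    intro β hβ
    refine ⟨?_, fun x => ?_⟩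
    · have := hΛ.1
      simp only [IsHermitian, conjTranspose_smul] at this ⊢
      rw [this]
      congr 1
    · exact (hΛ.smul hβ).2 x
  have hMpd : M.PosDef := by
    have h1 : ((1 - α) • Λ).PosSemidef := hsmul _ (by linarith)
    have h2 : ((S - Λ) + (1 - α) • Λ).PosSemidef := hΛS.add h1
    have h3 := hSG.add_posSemidef h2
    have : (G - S) + ((S - Λ) + (1 - α) • Λ) = M := by
      rw [hM]; rw [sub_smul, one_smul]; abel
    rwa [this] at h3
  have hMdet : IsUnit M.det := isUnit_iff_isUnit_det _ |>.mp hMpd.isUnit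
  have hMsym : Mᵀ = M := hMpd.isHermitian.eq
  have hGΛ : (G - Λ).PosSemidef := by
    have := hSG.posSemidef.add hΛS
    rwa [sub_add_sub_cancel] at this
  have hGsym : Gᵀ = G := by rw [hG]; exact (diagonal_transpose d)
  -- key algebraic identity
  have hMB : M * B = N := by
    rw [hB]
    exact Matrix.mul_nonsing_inv_cancel_left _ _ hMdet
  set x := B *ᵥ y with hx
  set w := x - y with hw
  have hMw : M *ᵥ w = (-c) • (Λ *ᵥ y) := by
    have hx' : M *ᵥ x = N *ᵥ y := by rw [hx, mulVec_mulVec, hMB]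
    rw [hw, mulVec_sub, hx', hN, hM, sub_mulVec, sub_mulVec, smul_mulVec,
      smul_mulVec, add_smul]
    module
  -- scalar quantities
  set s := y ⬝ᵥ Λ *ᵥ y with hs_def
  set q := w ⬝ᵥ Λ *ᵥ w with hq_def
  set t := w ⬝ᵥ Λ *ᵥ y with ht_def
  have hs : 0 ≤ s := by simpa using hΛ.dotProduct_mulVec_nonneg y
  have hq : 0 ≤ q := by simpa using hΛ.dotProduct_mulVec_nonneg w
  have hts : t ^ 2 ≤ q * s := by
    have := psd_cauchy_schwarz_s19 hΛ w y
    linarith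
  -- w ⬝ M w = -c * t
  have hwMw : w ⬝ᵥ M *ᵥ w = -c * t := by
    rw [hMw, dotProduct_smul, ht_def, smul_eq_mul]
  -- w ⬝ M y = -c * s
  have hwMy : w ⬝ᵥ M *ᵥ y = -c * s := by
    have : w ⬝ᵥ M *ᵥ y = (M *ᵥ w) ⬝ᵥ y := by
      rw [dotProduct_mulVec, ← mulVec_transpose, hMsym]
    rw [this, hMw, smul_dotProduct, smul_eq_mul, dotProduct_comm, hs_def]
  -- G-quadratic forms
  have hwGw : w ⬝ᵥ G *ᵥ w = -c * t + α * q := by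
    have : G = M + α • Λ := by rw [hM]; abel
    rw [this, add_mulVec, dotProduct_add, hwMw, smul_mulVec, dotProduct_smul,
      smul_eq_mul, hq_def]
  have hwGy : w ⬝ᵥ G *ᵥ y = -c * s + α * t := by
    have : G = M + α • Λ := by rw [hM]; abel
    rw [this, add_mulVec, dotProduct_add, hwMy, smul_mulVec, dotProduct_smul,
      smul_eq_mul, ht_def]
  have hyGw : y ⬝ᵥ G *ᵥ w = w ⬝ᵥ G *ᵥ y := by
    rw [dotProduct_mulVec y, ← mulVec_transpose, hGsym, dotProduct_comm]
  -- constraint (1-α) q ≤ -c t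
  have hkey : (1 - α) * q ≤ c * (-t) := by
    have h0 : 0 ≤ w ⬝ᵥ (G - Λ) *ᵥ w := by simpa using hGΛ.dotProduct_mulVec_nonneg w
    rw [sub_mulVec, dotProduct_sub, hwGw, ← hq_def] at h0
    linarith
  -- main inequality
  have hxGx : x ⬝ᵥ G *ᵥ x ≤ y ⬝ᵥ G *ᵥ y := by
    have hxyw : x = y + w := by rw [hw]; abel
    have hexp : x ⬝ᵥ G *ᵥ x = y ⬝ᵥ G *ᵥ y + 2 * (w ⬝ᵥ G *ᵥ y) + w ⬝ᵥ G *ᵥ w := by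
      rw [hxyw, mulVec_add, dotProduct_add, add_dotProduct, add_dotProduct, hyGw]
      ring
    rw [hexp, hwGy, hwGw]
    linarith [scalar_step_bound α c s q t hα0 hα1 hc0 hcα hs hq hts hkey]
  exact Real.sqrt_le_sqrt hxGx
end
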